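/- arXiv:2306.09146 — 3 statements merged into one kernel-verified Lean document; each statement's English description precedes it below -/
import Mathlib

section
/- Let G be a basic CUH graph in which both D and D̃ are realized, and let ℓ be a positive natural number with ℓ ≤ ω_R. Then every 2-colored graph H consisting of one blue vertex and a red ℓ-clique, with an arbitrary set of cross edges between the blue vertex and the red clique, is realized in G. -/
open SimpleGraph

/-- A partial colored isomorphism of the 2-colored graph `(G, red)`, defined on the set `S`:
an injective map preserving colors and adjacency on `S`. -/
def IsPartialIso {V : Type} (G : SimpleGraph V) (red : V → Prop) (S : Set V) (f : V → V) :
    Prop :=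
  Set.InjOn f S ∧ (∀ v ∈ S, (red (f v) ↔ red v)) ∧
    ∀ u ∈ S, ∀ v ∈ S, (G.Adj (f u) (f v) ↔ G.Adj u v)

/-- A 2-colored graph is ultrahomogeneous if every isomorphism between two finite induced
colored subgraphs extends to a color-preserving automorphism. -/
def Ultrahomogeneous {V : Type} (G : SimpleGraph V) (red : V → Prop) : Prop :=
  ∀ S : Set V, S.Finite → ∀ f : V → V, IsPartialIso G red S f →
    ∃ ψ : G ≃g G, (∀ v, red (ψ v) ↔ red v) ∧ ∀ v ∈ S, ψ v = f v

/-- The set `P` induces a disjoint union of cliques in `G` (no induced monochromatic `P₃`). -/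
def IsUnionOfCliques {V : Type} (G : SimpleGraph V) (P : Set V) : Prop :=
  ∀ u ∈ P, ∀ v ∈ P, ∀ w ∈ P, G.Adj u v → G.Adj v w → u ≠ w → G.Adj u w

/-- `M` is an inclusion-wise maximal clique of the subgraph of `G` induced on `P`. -/
def IsMaxCliqueIn {V : Type} (G : SimpleGraph V) (P : Set V) (M : Set V) : Prop :=
  M ⊆ P ∧ G.IsClique M ∧ ∀ M' : Set V, M' ⊆ P → G.IsClique M' → M ⊆ M' → M = M'

/-- `S` is an independent set in `G`. -/
def IsIndepIn {V : Type} (G : SimpleGraph V) (S : Set V) : Prop :=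
  ∀ u ∈ S, ∀ v ∈ S, ¬ G.Adj u v

/-- The 2-colored graph `(H, redH)` is realized in `(G, red)`, i.e. isomorphic to an
induced colored subgraph of `G`. -/
def Realizes {V : Type} (G : SimpleGraph V) (red : V → Prop) {W : Type} (H : SimpleGraph W)
    (redH : W → Prop) : Prop :=
  ∃ f : W → V, Function.Injective f ∧ (∀ w, red (f w) ↔ redH w) ∧
    ∀ u w : W, G.Adj (f u) (f w) ↔ H.Adj u w

/-- `(H, redH)` is minimally omitted in `(G, red)`: it is omitted, but every proper induced
subgraph of it is realized. -/
def MinOmitted {V : Type} (G : SimpleGraph V) (red : V → Prop) {W : Type} (H : SimpleGraph W)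
    (redH : W → Prop) : Prop :=
  ¬ Realizes G red H redH ∧
    ∀ S : Set W, S ≠ Set.univ → Realizes G red (H.induce S) (fun x => redH x.1)

/-- Isomorphism of 2-colored graphs. -/
def ColoredIso {V : Type} (G : SimpleGraph V) (red : V → Prop) {W : Type} (H : SimpleGraph W)
    (redH : W → Prop) : Prop :=
  ∃ e : G ≃g H, ∀ v, red v ↔ redH (e v)

/-- The graph obtained from `G` by complementing the cross edges while keeping the
edges inside each color class. -/
def crossComp {V : Type} (G : SimpleGraph V) (red : V → Prop) : SimpleGraph V :=
  SimpleGraph.fromRel (fun u v =>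
    ((red u ↔ red v) ∧ G.Adj u v) ∨ (¬ (red u ↔ red v) ∧ ¬ G.Adj u v))

/-- The blow-up of the 2-colored graph `(H, redH)` (whose red class should be independent),
replacing every red vertex by a copy of `I` forming a clique, joined to the neighbors of the
original vertex. -/
def blowUp {V : Type} (H : SimpleGraph V) (redH : V → Prop) (I : Type) :
    SimpleGraph ({v : V // redH v} × I ⊕ {v : V // ¬ redH v}) :=
  SimpleGraph.fromRel (fun x y =>
    match x, y with
    | Sum.inl (u, i), Sum.inl (u', i') => H.Adj u.1 u'.1 ∨ (u = u' ∧ i ≠ i')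
    | Sum.inl (u, _), Sum.inr b => H.Adj u.1 b.1
    | Sum.inr b, Sum.inl (u, _) => H.Adj b.1 u.1
    | Sum.inr b, Sum.inr b' => H.Adj b.1 b'.1)

/-- The coloring of the blow-up: all vertices replacing red vertices are red. -/
def blowUpRed (V : Type) (redH : V → Prop) (I : Type) :
    ({v : V // redH v} × I ⊕ {v : V // ¬ redH v}) → Prop :=
  Sum.elim (fun _ => True) (fun _ => False)

/-- `(G, red)` is a blow-up with the red class blown up: it is isomorphic (as a colored graph)
to the blow-up of some `(H, redH)` with independent red class by an `i`-clique, `2 ≤ i ≤ ℵ₀`. -/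
def IsBlowUpOf {V : Type} (G : SimpleGraph V) (red : V → Prop) : Prop :=
  ∃ (U : Type) (H : SimpleGraph U) (redH : U → Prop) (I : Type),
    (∀ u v : U, redH u → redH v → ¬ H.Adj u v) ∧
    2 ≤ Cardinal.mk I ∧ Cardinal.mk I ≤ Cardinal.aleph0 ∧
    ∃ e : G ≃g blowUp H redH I, ∀ v, red v ↔ blowUpRed U redH I (e v)

/-- `(G, red)` is a blow-up (of one of its two color classes). -/
def IsBlowUp {V : Type} (G : SimpleGraph V) (red : V → Prop) : Prop :=
  IsBlowUpOf G red ∨ IsBlowUpOf G (fun v => ¬ red v)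

/-- A CUH graph: a countably infinite ultrahomogeneous 2-colored graph in which both
color classes induce disjoint unions of cliques. -/
def IsCUH {V : Type} (G : SimpleGraph V) (red : V → Prop) : Prop :=
  Countable V ∧ Infinite V ∧ Ultrahomogeneous G red ∧
    IsUnionOfCliques G {v | red v} ∧ IsUnionOfCliques G {v | ¬ red v}

/-- A basic CUH graph: a CUH graph which is not a blow-up and where both independence
numbers are at least 2. -/
def IsBasicCUH {V : Type} (G : SimpleGraph V) (red : V → Prop) : Prop :=
  IsCUH G red ∧ ¬ IsBlowUp G red ∧
    (∃ u v, red u ∧ red v ∧ u ≠ v ∧ ¬ G.Adj u v) ∧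
    (∃ u v, ¬ red u ∧ ¬ red v ∧ u ≠ v ∧ ¬ G.Adj u v)

/-- The graph `D`: red vertices `0, 1`, blue vertices `2, 3`, edges
`{01, 23, 02, 03, 12}` (a 2-colored diamond). -/
def Dgraph : SimpleGraph (Fin 4) :=
  SimpleGraph.fromRel (fun x y =>
    (x = 0 ∧ y = 1) ∨ (x = 2 ∧ y = 3) ∨ (x = 0 ∧ y = 2) ∨ (x = 0 ∧ y = 3) ∨ (x = 1 ∧ y = 2))

/-- The coloring of `D` and `D̃`: `0, 1` are red, `2, 3` are blue. -/
def Dred : Fin 4 → Prop := fun x => x = 0 ∨ x = 1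

/-- The graph `D̃`, the cross-edge complement of `D`: the path `0 – 1 – 3 – 2`. -/
def Dtilde : SimpleGraph (Fin 4) :=
  SimpleGraph.fromRel (fun x y => (x = 0 ∧ y = 1) ∨ (x = 1 ∧ y = 3) ∨ (x = 3 ∧ y = 2))

/-- `T_r`: the triangle with two red vertices and one blue vertex. -/
def Tr : SimpleGraph (Fin 3) := ⊤

/-- The coloring of `T_r` and `T̃_r`: `0, 1` red, `2` blue. -/
def TrRed : Fin 3 → Prop := fun x => x = 0 ∨ x = 1

/-- `T̃_r`: a red edge together with an isolated blue vertex. -/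
def TrTilde : SimpleGraph (Fin 3) := SimpleGraph.fromRel (fun x y => x = 0 ∧ y = 1)

/-- `T_b`: the triangle with one red vertex and two blue vertices. -/
def Tb : SimpleGraph (Fin 3) := ⊤

/-- The coloring of `T_b` and `T̃_b`: `0` red, `1, 2` blue. -/
def TbRed : Fin 3 → Prop := fun x => x = 0

/-- `T̃_b`: a blue edge together with an isolated red vertex. -/
def TbTilde : SimpleGraph (Fin 3) := SimpleGraph.fromRel (fun x y => x = 1 ∧ y = 2)


section Machinery

variable {V : Type} (G : SimpleGraph V) (red : V → Prop)

/-- A red `n`-clique together with `m` pairwise adjacent blue vertices, with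
cross adjacencies prescribed by `B`. -/
def Pat (n m : ℕ) (B : Fin m → Fin n → Prop) : Prop :=
  ∃ (r : Fin n → V) (b : Fin m → V),
    Function.Injective r ∧ Function.Injective b ∧
    (∀ i, red (r i)) ∧ (∀ j, ¬ red (b j)) ∧
    (∀ i i', i ≠ i' → G.Adj (r i) (r i')) ∧
    (∀ j j', j ≠ j' → G.Adj (b j) (b j')) ∧
    (∀ j i, G.Adj (b j) (r i) ↔ B j i)

variable {G red}

lemma pat_mono {n m n' m' : ℕ} {B : Fin m → Fin n → Prop} {B' : Fin m' → Fin n' → Prop}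
    (e : Fin n' → Fin n) (g : Fin m' → Fin m)
    (he : Function.Injective e) (hg : Function.Injective g)
    (hB : ∀ j i, B' j i ↔ B (g j) (e i)) :
    Pat G red n m B → Pat G red n' m' B' := by
  rintro ⟨r, b, hri, hbi, hrr, hbb, hrc, hbc, hx⟩
  refine ⟨r ∘ e, b ∘ g, hri.comp he, hbi.comp hg, fun i => hrr _, fun j => hbb _,
    fun i i' h => hrc _ _ (fun hh => h (he hh)), fun j j' h => hbc _ _ (fun hh => h (hg hh)),
    fun j i => ?_⟩
  simp only [Function.comp_apply]
  rw [hx, hB]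

lemma pat_congr {n m : ℕ} {B B' : Fin m → Fin n → Prop}
    (hB : ∀ j i, B' j i ↔ B j i) : Pat G red n m B → Pat G red n m B' :=
  pat_mono id id (fun _ _ h => h) (fun _ _ h => h) hB

/-- Amalgamation over a common base, adding two red vertices. -/
lemma am_red (hUH : Ultrahomogeneous G red) (hRC : IsUnionOfCliques G {v | red v})
    {n m : ℕ} (hn : 0 < n)
    {B₁ B₂ : Fin m → Fin (n+1) → Prop} {B₃ : Fin m → Fin (n+2) → Prop}
    (hag : ∀ j (i : Fin (n+1)), i.val < n → (B₁ j i ↔ B₂ j i))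
    (hdif : ∃ j, ¬ (B₁ j (Fin.last n) ↔ B₂ j (Fin.last n)))
    (hB₃lo : ∀ j (i : Fin (n+2)) (h : i.val < n + 1), B₃ j i ↔ B₁ j ⟨i.val, h⟩)
    (hB₃hi : ∀ j, B₃ j ⟨n+1, by omega⟩ ↔ B₂ j (Fin.last n))
    (h₁ : Pat G red (n+1) m B₁) (h₂ : Pat G red (n+1) m B₂) :
    Pat G red (n+2) m B₃ := by
  classical
  obtain ⟨r₁, b₁, hr₁i, hb₁i, hr₁red, hb₁blue, hr₁cl, hb₁cl, hx₁⟩ := h₁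
  obtain ⟨r₂, b₂, hr₂i, hb₂i, hr₂red, hb₂blue, hr₂cl, hb₂cl, hx₂⟩ := h₂
  -- clique adjacency iff lemmas
  have radj₁ : ∀ i i', G.Adj (r₁ i) (r₁ i') ↔ i ≠ i' := fun i i' =>
    ⟨fun h hh => (G.ne_of_adj h) (congrArg r₁ hh), hr₁cl i i'⟩
  have radj₂ : ∀ i i', G.Adj (r₂ i) (r₂ i') ↔ i ≠ i' := fun i i' =>
    ⟨fun h hh => (G.ne_of_adj h) (congrArg r₂ hh), hr₂cl i i'⟩
  have badj₁ : ∀ j j', G.Adj (b₁ j) (b₁ j') ↔ j ≠ j' := fun j j' =>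
    ⟨fun h hh => (G.ne_of_adj h) (congrArg b₁ hh), hb₁cl j j'⟩
  have badj₂ : ∀ j j', G.Adj (b₂ j) (b₂ j') ↔ j ≠ j' := fun j j' =>
    ⟨fun h hh => (G.ne_of_adj h) (congrArg b₂ hh), hb₂cl j j'⟩
  set S : Set V := (Set.range fun i : Fin n => r₂ i.castSucc) ∪ Set.range b₂ with hS
  have hSfin : S.Finite := (Set.finite_range _).union (Set.finite_range _)
  set f : V → V := fun v =>
    if h : ∃ i : Fin n, r₂ i.castSucc = v then r₁ (h.choose).castSucc
    else if h' : ∃ j, b₂ j = v then b₁ h'.choose else v with hf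
  have hfr : ∀ i : Fin n, f (r₂ i.castSucc) = r₁ i.castSucc := by
    intro i
    have hex : ∃ i' : Fin n, r₂ i'.castSucc = r₂ i.castSucc := ⟨i, rfl⟩
    have : hex.choose = i := by
      have := hex.choose_spec
      have := hr₂i this
      exact Fin.castSucc_injective n this
    simp only [hf, dif_pos hex, this]
  have hfb : ∀ j, f (b₂ j) = b₁ j := by
    intro j
    have hnex : ¬ ∃ i : Fin n, r₂ i.castSucc = b₂ j := by
      rintro ⟨i, hi⟩
      exact hb₂blue j (hi ▸ hr₂red i.castSucc)
    have hex : ∃ j', b₂ j' = b₂ j := ⟨j, rfl⟩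
    have : hex.choose = j := hb₂i hex.choose_spec
    simp only [hf, dif_neg hnex, dif_pos hex, this]
  -- partial iso
  have hpi : IsPartialIso G red S f := by
    refine ⟨?_, ?_, ?_⟩
    · rintro u (⟨i, rfl⟩ | ⟨j, rfl⟩) v (⟨i', rfl⟩ | ⟨j', rfl⟩) huv
      · rw [hfr, hfr] at huv
        rw [Fin.castSucc_injective n (hr₁i huv)]
      · rw [hfr, hfb] at huv
        exact absurd (huv ▸ hr₁red i.castSucc) (hb₁blue j')
      · rw [hfr, hfb] at huv
        exact absurd (huv ▸ hr₁red i'.castSucc) (hb₁blue j)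
      · rw [hfb, hfb] at huv
        exact congrArg b₂ (hb₁i huv)
    · rintro v (⟨i, rfl⟩ | ⟨j, rfl⟩)
      · rw [hfr]; simp [hr₁red, hr₂red]
      · rw [hfb]; simp [hb₁blue, hb₂blue]
    · rintro u (⟨i, rfl⟩ | ⟨j, rfl⟩) v (⟨i', rfl⟩ | ⟨j', rfl⟩)
      · rw [hfr, hfr, radj₁, radj₂]
      · rw [hfr, hfb, G.adj_comm, G.adj_comm (r₂ i.castSucc), hx₁, hx₂]
        exact hag j' i.castSucc (by simp)
      · rw [hfb, hfr, hx₁, hx₂]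
        exact hag j i'.castSucc (by simp)
      · rw [hfb, hfb, badj₁, badj₂]
  obtain ⟨ψ, hψred, hψS⟩ := hUH S hSfin f hpi
  have hψr : ∀ i : Fin n, ψ (r₂ i.castSucc) = r₁ i.castSucc := fun i =>
    (hψS _ (Or.inl ⟨i, rfl⟩)).trans (hfr i)
  have hψb : ∀ j, ψ (b₂ j) = b₁ j := fun j =>
    (hψS _ (Or.inr ⟨j, rfl⟩)).trans (hfb j)
  set w : V := ψ (r₂ (Fin.last n)) with hw
  have hwred : red w := (hψred _).mpr (hr₂red _)
  have hwadj_r : ∀ i : Fin n, G.Adj w (r₁ i.castSucc) := by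
    intro i
    rw [← hψr i, hw]
    exact ψ.map_adj_iff.mpr (hr₂cl _ _ (by
      intro hh
      have : (Fin.last n).val = i.castSucc.val := congrArg Fin.val hh
      simp [Fin.last] at this
      omega))
  have hwadj_b : ∀ j, G.Adj (b₁ j) w ↔ B₂ j (Fin.last n) := by
    intro j
    rw [← hψb j, hw, ψ.map_adj_iff, hx₂]
  have hwne : w ≠ r₁ (Fin.last n) := by
    obtain ⟨j₀, hj₀⟩ := hdif
    intro hh
    apply hj₀
    rw [← hx₁ j₀ (Fin.last n), ← hwadj_b j₀, hh]
  have hwadj_last : G.Adj w (r₁ (Fin.last n)) := by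
    have h1 : G.Adj w (r₁ (⟨0, hn⟩ : Fin n).castSucc) := hwadj_r _
    have h2 : G.Adj (r₁ (⟨0, hn⟩ : Fin n).castSucc) (r₁ (Fin.last n)) := by
      apply hr₁cl
      intro hh
      have : ((⟨0, hn⟩ : Fin n).castSucc).val = (Fin.last n).val := congrArg Fin.val hh
      simp [Fin.last] at this
      omega
    exact hRC w hwred _ (hr₁red _) _ (hr₁red _) h1 h2 hwne
  -- build the output
  refine ⟨fun i => if h : i.val < n + 1 then r₁ ⟨i.val, h⟩ else w, b₁, ?_, hb₁i, ?_, hb₁blue,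
    ?_, hb₁cl, ?_⟩
  · intro i i' hii
    by_cases h : i.val < n + 1 <;> by_cases h' : i'.val < n + 1
    · simp only [dif_pos h, dif_pos h'] at hii
      have h2 := hr₁i hii
      rw [Fin.mk.injEq] at h2
      exact Fin.ext h2
    · simp only [dif_pos h, dif_neg h'] at hii
      by_cases hcase : i.val < n
      · exact absurd hii.symm (G.ne_of_adj (hwadj_r ⟨i.val, hcase⟩))
      · have : i.val = n := by omega
        exact absurd hii.symm (by
          have : (⟨i.val, h⟩ : Fin (n+1)) = Fin.last n := by
            apply Fin.ext; simp [Fin.last, this]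
          rw [this]; exact hwne)
    · simp only [dif_neg h, dif_pos h'] at hii
      by_cases hcase : i'.val < n
      · exact absurd hii (G.ne_of_adj (hwadj_r ⟨i'.val, hcase⟩))
      · have hv : i'.val = n := by omega
        exact absurd hii (by
          have : (⟨i'.val, h'⟩ : Fin (n+1)) = Fin.last n := by
            apply Fin.ext; simp [Fin.last, hv]
          rw [this]; exact hwne)
    · apply Fin.ext; omega
  · intro i
    by_cases h : i.val < n + 1
    · simp only [dif_pos h]; exact hr₁red _
    · simp only [dif_neg h]; exact hwred
  · intro i i' hii
    by_cases h : i.val < n + 1 <;> by_cases h' : i'.val < n + 1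
    · simp only [dif_pos h, dif_pos h']
      apply hr₁cl
      intro hh
      rw [Fin.mk.injEq] at hh
      exact hii (Fin.ext hh)
    · simp only [dif_pos h, dif_neg h']
      apply G.adj_symm
      by_cases hcase : i.val < n
      · have : (⟨i.val, h⟩ : Fin (n+1)) = (⟨i.val, hcase⟩ : Fin n).castSucc := by
          apply Fin.ext; simp
        rw [this]; exact hwadj_r _
      · have : (⟨i.val, h⟩ : Fin (n+1)) = Fin.last n := by
          apply Fin.ext; simp [Fin.last]; omega
        rw [this]; exact hwadj_last
    · simp only [dif_neg h, dif_pos h']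
      by_cases hcase : i'.val < n
      · have : (⟨i'.val, h'⟩ : Fin (n+1)) = (⟨i'.val, hcase⟩ : Fin n).castSucc := by
          apply Fin.ext; simp
        rw [this]; exact hwadj_r _
      · have : (⟨i'.val, h'⟩ : Fin (n+1)) = Fin.last n := by
          apply Fin.ext; simp [Fin.last]; omega
        rw [this]; exact hwadj_last
    · exact absurd (Fin.ext (by omega : i.val = i'.val)) hii
  · intro j i
    by_cases h : i.val < n + 1
    · simp only [dif_pos h]
      rw [hx₁, hB₃lo j i h]
    · simp only [dif_neg h]
      have : i = ⟨n+1, by omega⟩ := Fin.ext (show i.val = n+1 by omega)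
      rw [this, hB₃hi, ← hwadj_b]

/-- Amalgamation over a common base, adding two blue vertices. -/
lemma am_blue (hUH : Ultrahomogeneous G red) (hBC : IsUnionOfCliques G {v | ¬ red v})
    {n m : ℕ} (hm : 0 < m)
    {C₁ C₂ : Fin (m+1) → Fin n → Prop} {C₃ : Fin (m+2) → Fin n → Prop}
    (hag : ∀ (j : Fin (m+1)) i, j.val < m → (C₁ j i ↔ C₂ j i))
    (hdif : ∃ i, ¬ (C₁ (Fin.last m) i ↔ C₂ (Fin.last m) i))
    (hC₃lo : ∀ (j : Fin (m+2)) i (h : j.val < m + 1), C₃ j i ↔ C₁ ⟨j.val, h⟩ i)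
    (hC₃hi : ∀ i, C₃ ⟨m+1, by omega⟩ i ↔ C₂ (Fin.last m) i)
    (h₁ : Pat G red n (m+1) C₁) (h₂ : Pat G red n (m+1) C₂) :
    Pat G red n (m+2) C₃ := by
  classical
  obtain ⟨r₁, b₁, hr₁i, hb₁i, hr₁red, hb₁blue, hr₁cl, hb₁cl, hx₁⟩ := h₁
  obtain ⟨r₂, b₂, hr₂i, hb₂i, hr₂red, hb₂blue, hr₂cl, hb₂cl, hx₂⟩ := h₂
  have radj₁ : ∀ i i', G.Adj (r₁ i) (r₁ i') ↔ i ≠ i' := fun i i' =>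
    ⟨fun h hh => (G.ne_of_adj h) (congrArg r₁ hh), hr₁cl i i'⟩
  have radj₂ : ∀ i i', G.Adj (r₂ i) (r₂ i') ↔ i ≠ i' := fun i i' =>
    ⟨fun h hh => (G.ne_of_adj h) (congrArg r₂ hh), hr₂cl i i'⟩
  have badj₁ : ∀ j j', G.Adj (b₁ j) (b₁ j') ↔ j ≠ j' := fun j j' =>
    ⟨fun h hh => (G.ne_of_adj h) (congrArg b₁ hh), hb₁cl j j'⟩
  have badj₂ : ∀ j j', G.Adj (b₂ j) (b₂ j') ↔ j ≠ j' := fun j j' =>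
    ⟨fun h hh => (G.ne_of_adj h) (congrArg b₂ hh), hb₂cl j j'⟩
  set S : Set V := Set.range r₂ ∪ (Set.range fun j : Fin m => b₂ j.castSucc) with hS
  have hSfin : S.Finite := (Set.finite_range _).union (Set.finite_range _)
  set f : V → V := fun v =>
    if h : ∃ i, r₂ i = v then r₁ h.choose
    else if h' : ∃ j : Fin m, b₂ j.castSucc = v then b₁ (h'.choose).castSucc else v with hf
  have hfr : ∀ i, f (r₂ i) = r₁ i := by
    intro i
    have hex : ∃ i', r₂ i' = r₂ i := ⟨i, rfl⟩
    have : hex.choose = i := hr₂i hex.choose_spec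
    simp only [hf, dif_pos hex, this]
  have hfb : ∀ j : Fin m, f (b₂ j.castSucc) = b₁ j.castSucc := by
    intro j
    have hnex : ¬ ∃ i, r₂ i = b₂ j.castSucc := by
      rintro ⟨i, hi⟩
      exact hb₂blue j.castSucc (hi ▸ hr₂red i)
    have hex : ∃ j' : Fin m, b₂ j'.castSucc = b₂ j.castSucc := ⟨j, rfl⟩
    have : hex.choose = j := by
      have := hex.choose_spec
      have := hb₂i this
      exact Fin.castSucc_injective m this
    simp only [hf, dif_neg hnex, dif_pos hex, this]
  have hpi : IsPartialIso G red S f := by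
    refine ⟨?_, ?_, ?_⟩
    · rintro u (⟨i, rfl⟩ | ⟨j, rfl⟩) v (⟨i', rfl⟩ | ⟨j', rfl⟩) huv
      · rw [hfr, hfr] at huv
        exact congrArg r₂ (hr₁i huv)
      · rw [hfr, hfb] at huv
        exact absurd (huv ▸ hr₁red i) (hb₁blue j'.castSucc)
      · rw [hfr, hfb] at huv
        exact absurd (huv ▸ hr₁red i') (hb₁blue j.castSucc)
      · rw [hfb, hfb] at huv
        have h2 := hb₁i huv
        exact congrArg b₂ h2
    · rintro v (⟨i, rfl⟩ | ⟨j, rfl⟩)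
      · rw [hfr]; simp [hr₁red, hr₂red]
      · rw [hfb]; simp [hb₁blue, hb₂blue]
    · rintro u (⟨i, rfl⟩ | ⟨j, rfl⟩) v (⟨i', rfl⟩ | ⟨j', rfl⟩)
      · rw [hfr, hfr, radj₁, radj₂]
      · rw [hfr, hfb, G.adj_comm, G.adj_comm (r₂ i), hx₁, hx₂]
        exact hag j'.castSucc i (by simp)
      · rw [hfb, hfr, hx₁, hx₂]
        exact hag j.castSucc i' (by simp)
      · rw [hfb, hfb, badj₁, badj₂]
  obtain ⟨ψ, hψred, hψS⟩ := hUH S hSfin f hpi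
  have hψr : ∀ i, ψ (r₂ i) = r₁ i := fun i =>
    (hψS _ (Or.inl ⟨i, rfl⟩)).trans (hfr i)
  have hψb : ∀ j : Fin m, ψ (b₂ j.castSucc) = b₁ j.castSucc := fun j =>
    (hψS _ (Or.inr ⟨j, rfl⟩)).trans (hfb j)
  set w : V := ψ (b₂ (Fin.last m)) with hw
  have hwblue : ¬ red w := fun h => hb₂blue _ ((hψred _).mp h)
  have hwadj_b : ∀ j : Fin m, G.Adj w (b₁ j.castSucc) := by
    intro j
    rw [← hψb j, hw]
    exact ψ.map_adj_iff.mpr (hb₂cl _ _ (by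
      intro hh
      have : (Fin.last m).val = j.castSucc.val := congrArg Fin.val hh
      simp [Fin.last] at this
      omega))
  have hwadj_r : ∀ i, G.Adj w (r₁ i) ↔ C₂ (Fin.last m) i := by
    intro i
    rw [← hψr i, hw, ψ.map_adj_iff, hx₂]
  have hwne : w ≠ b₁ (Fin.last m) := by
    obtain ⟨i₀, hi₀⟩ := hdif
    intro hh
    apply hi₀
    rw [← hx₁ (Fin.last m) i₀, ← hwadj_r i₀, hh]
  have hwadj_last : G.Adj w (b₁ (Fin.last m)) := by
    have h1 : G.Adj w (b₁ (⟨0, hm⟩ : Fin m).castSucc) := hwadj_b _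
    have h2 : G.Adj (b₁ (⟨0, hm⟩ : Fin m).castSucc) (b₁ (Fin.last m)) := by
      apply hb₁cl
      intro hh
      have : ((⟨0, hm⟩ : Fin m).castSucc).val = (Fin.last m).val := congrArg Fin.val hh
      simp [Fin.last] at this
      omega
    exact hBC w hwblue _ (hb₁blue _) _ (hb₁blue _) h1 h2 hwne
  refine ⟨r₁, fun j => if h : j.val < m + 1 then b₁ ⟨j.val, h⟩ else w, hr₁i, ?_, hr₁red, ?_,
    hr₁cl, ?_, ?_⟩
  · intro j j' hjj
    by_cases h : j.val < m + 1 <;> by_cases h' : j'.val < m + 1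
    · simp only [dif_pos h, dif_pos h'] at hjj
      have h2 := hb₁i hjj
      rw [Fin.mk.injEq] at h2
      exact Fin.ext h2
    · simp only [dif_pos h, dif_neg h'] at hjj
      by_cases hcase : j.val < m
      · exact absurd hjj.symm (G.ne_of_adj (by
          have : (⟨j.val, h⟩ : Fin (m+1)) = (⟨j.val, hcase⟩ : Fin m).castSucc := by
            apply Fin.ext; simp
          rw [this]; exact hwadj_b _))
      · have hv : j.val = m := by omega
        exact absurd hjj.symm (by
          have : (⟨j.val, h⟩ : Fin (m+1)) = Fin.last m := by
            apply Fin.ext; simp [Fin.last, hv]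
          rw [this]; exact hwne)
    · simp only [dif_neg h, dif_pos h'] at hjj
      by_cases hcase : j'.val < m
      · exact absurd hjj (G.ne_of_adj (by
          have : (⟨j'.val, h'⟩ : Fin (m+1)) = (⟨j'.val, hcase⟩ : Fin m).castSucc := by
            apply Fin.ext; simp
          rw [this]; exact hwadj_b _))
      · have hv : j'.val = m := by omega
        exact absurd hjj (by
          have : (⟨j'.val, h'⟩ : Fin (m+1)) = Fin.last m := by
            apply Fin.ext; simp [Fin.last, hv]
          rw [this]; exact hwne)
    · apply Fin.ext; omega
  · intro j
    by_cases h : j.val < m + 1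
    · simp only [dif_pos h]; exact hb₁blue _
    · simp only [dif_neg h]; exact hwblue
  · intro j j' hjj
    by_cases h : j.val < m + 1 <;> by_cases h' : j'.val < m + 1
    · simp only [dif_pos h, dif_pos h']
      apply hb₁cl
      intro hh
      rw [Fin.mk.injEq] at hh
      exact hjj (Fin.ext hh)
    · simp only [dif_pos h, dif_neg h']
      apply G.adj_symm
      by_cases hcase : j.val < m
      · have : (⟨j.val, h⟩ : Fin (m+1)) = (⟨j.val, hcase⟩ : Fin m).castSucc := by
          apply Fin.ext; simp
        rw [this]; exact hwadj_b _
      · have : (⟨j.val, h⟩ : Fin (m+1)) = Fin.last m := by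
          apply Fin.ext; simp [Fin.last]; omega
        rw [this]; exact hwadj_last
    · simp only [dif_neg h, dif_pos h']
      by_cases hcase : j'.val < m
      · have : (⟨j'.val, h'⟩ : Fin (m+1)) = (⟨j'.val, hcase⟩ : Fin m).castSucc := by
          apply Fin.ext; simp
        rw [this]; exact hwadj_b _
      · have : (⟨j'.val, h'⟩ : Fin (m+1)) = Fin.last m := by
          apply Fin.ext; simp [Fin.last]; omega
        rw [this]; exact hwadj_last
    · exact absurd (Fin.ext (by omega : j.val = j'.val)) hjj
  · intro j i
    by_cases h : j.val < m + 1
    · simp only [dif_pos h]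
      rw [hx₁, hC₃lo j i h]
    · simp only [dif_neg h]
      have : j = ⟨m+1, by omega⟩ := Fin.ext (show j.val = m+1 by omega)
      rw [this, hC₃hi, ← hwadj_r]

/-- D as a `Pat`: blue 0 is complete to the red edge, blue 1 sees only red 0. -/
lemma patD_of (hD : Realizes G red Dgraph Dred) :
    Pat G red 2 2 ![fun _ => True, fun i => i.val = 0] := by
  obtain ⟨f, hfi, hfc, hfa⟩ := hD
  refine ⟨fun i => f ⟨i.val, by omega⟩, fun j => f ⟨j.val + 2, by omega⟩, ?_, ?_, ?_, ?_,
    ?_, ?_, ?_⟩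
  · intro i i' h
    have := hfi h
    rw [Fin.mk.injEq] at this
    exact Fin.ext this
  · intro j j' h
    have := hfi h
    rw [Fin.mk.injEq] at this
    exact Fin.ext (by omega)
  · intro i
    rw [hfc]
    fin_cases i <;> simp [Dred]
  · intro j
    rw [hfc]
    fin_cases j <;> simp [Dred]
  · intro i i' h
    rw [hfa]
    have hne : i.val ≠ i'.val := fun hh => h (Fin.ext hh)
    fin_cases i <;> fin_cases i' <;>
      simp only [Dgraph, SimpleGraph.fromRel_adj] <;> first | decide | (exfalso; exact hne rfl)
  · intro j j' h
    rw [hfa]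
    have hne : j.val ≠ j'.val := fun hh => h (Fin.ext hh)
    fin_cases j <;> fin_cases j' <;>
      simp only [Dgraph, SimpleGraph.fromRel_adj] <;> first | decide | (exfalso; exact hne rfl)
  · intro j i
    rw [hfa]
    fin_cases j <;> fin_cases i <;>
      simp [Dgraph, SimpleGraph.fromRel_adj] <;> decide

/-- D̃ as a `Pat`: blue 0 sees only red 1, blue 1 sees nothing. -/
lemma patDt_of (hDt : Realizes G red Dtilde Dred) :
    Pat G red 2 2 ![fun i => i.val = 1, fun _ => False] := by
  obtain ⟨f, hfi, hfc, hfa⟩ := hDt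
  refine ⟨fun i => f ⟨i.val, by omega⟩, fun j => f ⟨3 - j.val, by omega⟩, ?_, ?_, ?_, ?_,
    ?_, ?_, ?_⟩
  · intro i i' h
    have := hfi h
    rw [Fin.mk.injEq] at this
    exact Fin.ext this
  · intro j j' h
    have := hfi h
    rw [Fin.mk.injEq] at this
    exact Fin.ext (by omega)
  · intro i
    rw [hfc]
    fin_cases i <;> simp [Dred]
  · intro j
    rw [hfc]
    fin_cases j <;> simp [Dred]
  · intro i i' h
    rw [hfa]
    have hne : i.val ≠ i'.val := fun hh => h (Fin.ext hh)
    fin_cases i <;> fin_cases i' <;>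
      simp only [Dtilde, SimpleGraph.fromRel_adj] <;> first | decide | (exfalso; exact hne rfl)
  · intro j j' h
    rw [hfa]
    have hne : j.val ≠ j'.val := fun hh => h (Fin.ext hh)
    fin_cases j <;> fin_cases j' <;>
      simp only [Dtilde, SimpleGraph.fromRel_adj] <;> first | decide | (exfalso; exact hne rfl)
  · intro j i
    rw [hfa]
    fin_cases j <;> fin_cases i <;>
      simp [Dtilde, SimpleGraph.fromRel_adj] <;> decide

lemma swap_val_iff {n a b : ℕ} (ha : a < n) (hb : b < n) (i : Fin n) :
    ((Equiv.swap (⟨a, ha⟩ : Fin n) ⟨b, hb⟩) i).val = a ↔ i.val = b := by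
  constructor
  · intro h
    have h2 : (Equiv.swap (⟨a, ha⟩ : Fin n) ⟨b, hb⟩) i = ⟨a, ha⟩ := Fin.ext h
    have h3 := congrArg (Equiv.swap (⟨a, ha⟩ : Fin n) ⟨b, hb⟩) h2
    rw [Equiv.swap_apply_self, Equiv.swap_apply_left] at h3
    exact congrArg Fin.val h3
  · intro h
    have h2 : i = ⟨b, hb⟩ := Fin.ext h
    rw [h2, Equiv.swap_apply_right]

lemma pat_swap' {n m : ℕ} {a b : ℕ} (ha : a < n) (hb : b < n)
    {B B' : Fin m → Fin n → Prop}
    (h : ∀ j i, B' j i ↔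
      B j (if i.val = a then ⟨b, hb⟩ else if i.val = b then ⟨a, ha⟩ else i)) :
    Pat G red n m B → Pat G red n m B' := by
  refine pat_mono
    (fun i => if i.val = a then ⟨b, hb⟩ else if i.val = b then ⟨a, ha⟩ else i) id ?_
    Function.injective_id h
  intro i i' heq
  have hv := congrArg Fin.val heq
  simp only [] at hv
  split_ifs at hv <;> (try simp only [Fin.val_mk] at hv) <;> (apply Fin.ext; omega)

/-- Θ⁻(2): a red edge with an adjacent pair of blue vertices, one complete, one empty. -/
lemma theta2 (hUH : Ultrahomogeneous G red) (hBC : IsUnionOfCliques G {v | ¬ red v})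
    (hD : Realizes G red Dgraph Dred) (hDt : Realizes G red Dtilde Dred) :
    Pat G red 2 2 ![fun _ => True, fun _ => False] := by
  have hD2 : Pat G red 2 2 ![fun i => i.val = 0, fun _ => True] := by
    refine pat_mono id ![1, 0] Function.injective_id (by decide) ?_ (patD_of hD)
    intro j i; fin_cases j <;> simp
  have hT2 : Pat G red 2 2 ![fun i => i.val = 0, fun _ => False] := by
    refine pat_mono (fun i => ⟨1 - i.val, by omega⟩) id ?_ Function.injective_id ?_
      (patDt_of hDt)
    · intro i i' h
      rw [Fin.mk.injEq] at h
      exact Fin.ext (by omega)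
    · intro j i; fin_cases j <;> simp <;> omega
  have hout : Pat G red 2 3 ![fun i => i.val = 0, fun _ => True, fun _ => False] := by
    refine am_blue hUH hBC (by omega)
      (C₁ := ![fun i => i.val = 0, fun _ => True])
      (C₂ := ![fun i => i.val = 0, fun _ => False]) ?_ ?_ ?_ ?_ hD2 hT2
    · intro j i h
      fin_cases j
      · simp
      · exact absurd h (by decide)
    · exact ⟨0, by simp [Fin.last]⟩
    · intro j i h
      fin_cases j
      · simp
      · simp
      · exact absurd h (by decide)
    · intro i; simp [Fin.last]
  refine pat_mono id ![1, 2] Function.injective_id (by decide) ?_ hout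
  intro j i; fin_cases j <;> simp

/-- χ: a red edge with an adjacent pair of blue vertices, each seeing one end. -/
lemma chi (hUH : Ultrahomogeneous G red) (hBC : IsUnionOfCliques G {v | ¬ red v})
    (hDt : Realizes G red Dtilde Dred) :
    Pat G red 2 2 ![fun i => i.val = 0, fun i => i.val = 1] := by
  have hT2 : Pat G red 2 2 ![fun i => i.val = 0, fun _ => False] := by
    refine pat_mono (fun i => ⟨1 - i.val, by omega⟩) id ?_ Function.injective_id ?_
      (patDt_of hDt)
    · intro i i' h
      rw [Fin.mk.injEq] at h
      exact Fin.ext (by omega)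
    · intro j i; fin_cases j <;> simp <;> omega
  have hT3 : Pat G red 2 2 ![fun _ => False, fun i => i.val = 0] := by
    refine pat_mono id ![1, 0] Function.injective_id (by decide) ?_ hT2
    intro j i; fin_cases j <;> simp
  have hT4 : Pat G red 2 2 ![fun _ => False, fun i => i.val = 1] := by
    refine pat_mono id ![1, 0] Function.injective_id (by decide) ?_ (patDt_of hDt)
    intro j i; fin_cases j <;> simp
  have hout : Pat G red 2 3 ![fun _ => False, fun i => i.val = 0, fun i => i.val = 1] := by
    refine am_blue hUH hBC (by omega)
      (C₁ := ![fun _ => False, fun i => i.val = 0])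
      (C₂ := ![fun _ => False, fun i => i.val = 1]) ?_ ?_ ?_ ?_ hT3 hT4
    · intro j i h
      fin_cases j
      · simp
      · exact absurd h (by decide)
    · exact ⟨0, by simp [Fin.last]⟩
    · intro j i h
      fin_cases j
      · simp
      · simp
      · exact absurd h (by decide)
    · intro i; simp [Fin.last]
  refine pat_mono id ![1, 2] Function.injective_id (by decide) ?_ hout
  intro j i; fin_cases j <;> simp

/-- The seed `![PO 0, PE]` form of D̃. -/
lemma patDt0 (hDt : Realizes G red Dtilde Dred) :
    Pat G red 2 2 ![fun i => i.val = 0, fun _ => False] := by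
  refine pat_mono (fun i => ⟨1 - i.val, by omega⟩) id ?_ Function.injective_id ?_
    (patDt_of hDt)
  · intro i i' h
    rw [Fin.mk.injEq] at h
    exact Fin.ext (by omega)
  · intro j i; fin_cases j <;> simp <;> omega

/-- The main chain: the families Φ, Θ⁻, H2, G12 exist in every size. -/
lemma chain (hUH : Ultrahomogeneous G red) (hRC : IsUnionOfCliques G {v | red v})
    (hBC : IsUnionOfCliques G {v | ¬ red v})
    (hD : Realizes G red Dgraph Dred) (hDt : Realizes G red Dtilde Dred) :
    ∀ k : ℕ,
      Pat G red (k+2) 2 ![fun _ => True, fun i => i.val = k+1] ∧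
      Pat G red (k+2) 2 ![fun _ => True, fun _ => False] ∧
      Pat G red (k+3) 2 ![fun i => i.val ≠ k+2, fun _ => False] ∧
      Pat G red (k+3) 2 ![fun i => i.val ≠ k+2, fun i => i.val = k+2] := by
  have hθ2 := theta2 hUH hBC hD hDt
  have hχ := chi hUH hBC hDt
  have hT2 := patDt0 hDt
  intro k
  induction k with
  | zero =>
    -- Φ(2) : red swap of D
    have hΦ2 : Pat G red 2 2 ![fun _ => True, fun i => i.val = 1] := by
      refine pat_mono (fun i => ⟨1 - i.val, by omega⟩) id ?_ Function.injective_id ?_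
        (patD_of hD)
      · intro i i' h
        rw [Fin.mk.injEq] at h
        exact Fin.ext (by omega)
      · intro j i; fin_cases j <;> simp <;> omega
    refine ⟨hΦ2, hθ2, ?_, ?_⟩
    · -- H2(3)
      have h' : Pat G red 3 2 ![fun i => i.val ≠ 1, fun _ => False] := by
        refine am_red hUH hRC (by omega)
          (B₁ := ![fun i => i.val = 0, fun _ => False])
          (B₂ := ![fun _ => True, fun _ => False]) ?_ ?_ ?_ ?_ hT2 hθ2
        · intro j i h; fin_cases j <;> simp <;> omega
        · exact ⟨0, by simp [Fin.last]⟩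
        · intro j i h; fin_cases j <;> simp <;> omega
        · intro j; fin_cases j <;> simp [Fin.last]
      refine pat_swap' (show (1:ℕ) < 3 by omega) (show (2:ℕ) < 3 by omega) ?_ h'
      intro j i
      fin_cases j
      all_goals simp only [Matrix.cons_val_zero, Matrix.cons_val_one, Matrix.head_cons]
      all_goals split_ifs <;> (try simp) <;> (try omega)
    · -- G12(3)
      refine am_red hUH hRC (by omega)
        (B₁ := ![fun _ => True, fun _ => False])
        (B₂ := ![fun i => i.val = 0, fun i => i.val = 1]) ?_ ?_ ?_ ?_ hθ2 hχ
      · intro j i h; fin_cases j <;> simp <;> omega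
      · exact ⟨0, by simp [Fin.last]⟩
      · intro j i h; fin_cases j <;> simp <;> omega
      · intro j; fin_cases j <;> simp [Fin.last]
  | succ k IH =>
    obtain ⟨hφ, hθ, hh2, hg12⟩ := IH
    -- Φ(k+3)
    have hΦ' : Pat G red (k+3) 2 ![fun _ => True, fun i => i.val = k+1] := by
      refine am_red hUH hRC (by omega)
        (B₁ := ![fun _ => True, fun i => i.val = k+1])
        (B₂ := ![fun _ => True, fun _ => False]) ?_ ?_ ?_ ?_ hφ hθ
      · intro j i h; fin_cases j <;> simp <;> omega
      · exact ⟨1, by simp [Fin.last]⟩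
      · intro j i h; fin_cases j <;> simp <;> omega
      · intro j; fin_cases j <;> simp [Fin.last] <;> omega
    have hΦ : Pat G red (k+3) 2 ![fun _ => True, fun i => i.val = k+2] := by
      refine pat_swap' (show k+1 < k+3 by omega) (show k+2 < k+3 by omega) ?_ hΦ'
      intro j i
      fin_cases j
      all_goals simp only [Matrix.cons_val_zero, Matrix.cons_val_one, Matrix.head_cons]
      all_goals split_ifs <;> (try simp) <;> (try omega)
    -- W2(k+3)
    have hg12s : Pat G red (k+3) 2 ![fun i => i.val = k+2, fun i => i.val ≠ k+2] := by
      refine pat_mono id ![1, 0] Function.injective_id (by decide) ?_ hg12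
      intro j i; fin_cases j <;> simp
    have hΦs : Pat G red (k+3) 2 ![fun i => i.val = k+2, fun _ => True] := by
      refine pat_mono id ![1, 0] Function.injective_id (by decide) ?_ hΦ
      intro j i; fin_cases j <;> simp
    have hW2' : Pat G red (k+3) 3
        ![fun i => i.val = k+2, fun i => i.val ≠ k+2, fun _ => True] := by
      refine am_blue hUH hBC (by omega)
        (C₁ := ![fun i => i.val = k+2, fun i => i.val ≠ k+2])
        (C₂ := ![fun i => i.val = k+2, fun _ => True]) ?_ ?_ ?_ ?_ hg12s hΦs
      · intro j i h
        fin_cases j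
        · simp
        · exact absurd h (by decide)
      · exact ⟨⟨k+2, by omega⟩, by simp [Fin.last]⟩
      · intro j i h
        fin_cases j
        · simp
        · simp
        · exact absurd h (by decide)
      · intro i; simp [Fin.last]
    have hW2 : Pat G red (k+3) 2 ![fun i => i.val ≠ k+2, fun _ => True] := by
      refine pat_mono id ![1, 2] Function.injective_id (by decide) ?_ hW2'
      intro j i; fin_cases j <;> simp
    -- Θ(k+3)
    have hΘ' : Pat G red (k+3) 3
        ![fun i => i.val ≠ k+2, fun _ => False, fun _ => True] := by
      refine am_blue hUH hBC (by omega)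
        (C₁ := ![fun i => i.val ≠ k+2, fun _ => False])
        (C₂ := ![fun i => i.val ≠ k+2, fun _ => True]) ?_ ?_ ?_ ?_ hh2 hW2
      · intro j i h
        fin_cases j
        · simp
        · exact absurd h (by decide)
      · exact ⟨⟨0, by omega⟩, by simp [Fin.last]⟩
      · intro j i h
        fin_cases j
        · simp
        · simp
        · exact absurd h (by decide)
      · intro i; simp [Fin.last]
    have hΘ : Pat G red (k+3) 2 ![fun _ => True, fun _ => False] := by
      refine pat_mono id ![2, 1] Function.injective_id (by decide) ?_ hΘ'
      intro j i; fin_cases j <;> simp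
    refine ⟨hΦ, hΘ, ?_, ?_⟩
    · -- H2(k+4)
      have h' : Pat G red (k+4) 2 ![fun i => i.val ≠ k+2, fun _ => False] := by
        refine am_red hUH hRC (by omega)
          (B₁ := ![fun i => i.val ≠ k+2, fun _ => False])
          (B₂ := ![fun _ => True, fun _ => False]) ?_ ?_ ?_ ?_ hh2 hΘ
        · intro j i h; fin_cases j <;> simp <;> omega
        · exact ⟨0, by simp [Fin.last]⟩
        · intro j i h; fin_cases j <;> simp <;> omega
        · intro j; fin_cases j <;> simp [Fin.last] <;> omega
      refine pat_swap' (show k+2 < k+4 by omega) (show k+3 < k+4 by omega) ?_ h'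
      intro j i
      fin_cases j
      all_goals simp only [Matrix.cons_val_zero, Matrix.cons_val_one, Matrix.head_cons]
      all_goals split_ifs <;> (try simp) <;> (try omega)
    · -- G12(k+4)
      refine am_red hUH hRC (by omega)
        (B₁ := ![fun _ => True, fun _ => False])
        (B₂ := ![fun i => i.val ≠ k+2, fun i => i.val = k+2]) ?_ ?_ ?_ ?_ hΘ hg12
      · intro j i h; fin_cases j <;> simp <;> omega
      · exact ⟨0, by simp [Fin.last]⟩
      · intro j i h; fin_cases j <;> simp <;> omega
      · intro j; fin_cases j <;> simp [Fin.last] <;> omega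

lemma fin1_inj {t : ℕ} (f : Fin (0+1) → Fin t) : Function.Injective f := by
  intro a b _
  have ha := a.isLt
  have hb := b.isLt
  exact Fin.ext (by omega)

lemma full_pat (hUH : Ultrahomogeneous G red) (hRC : IsUnionOfCliques G {v | red v})
    (hBC : IsUnionOfCliques G {v | ¬ red v})
    (hD : Realizes G red Dgraph Dred) (hDt : Realizes G red Dtilde Dred) :
    ∀ n : ℕ, Pat G red (n+1) 1 ![fun _ => True] := by
  intro n
  match n with
  | 0 =>
    refine pat_mono (fun _ => 0) (fun _ => 0)
      (fin1_inj _) (fin1_inj _) ?_ (patD_of hD)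
    intro j i; simp
  | (k+1) =>
    refine pat_mono id (fun _ => 0) Function.injective_id
      (fin1_inj _) ?_ (chain hUH hRC hBC hD hDt k).1
    intro j i; simp

lemma empty_pat (hUH : Ultrahomogeneous G red) (hRC : IsUnionOfCliques G {v | red v})
    (hBC : IsUnionOfCliques G {v | ¬ red v})
    (hD : Realizes G red Dgraph Dred) (hDt : Realizes G red Dtilde Dred) :
    ∀ n : ℕ, Pat G red (n+1) 1 ![fun _ => False] := by
  intro n
  match n with
  | 0 =>
    refine pat_mono (fun _ => 0) (fun _ => 1)
      (fin1_inj _) (fin1_inj _) ?_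
      (patDt_of hDt)
    intro j i; simp
  | 1 =>
    refine pat_mono id (fun _ => 1) Function.injective_id
      (fin1_inj _) ?_ (patDt_of hDt)
    intro j i; simp
  | (k+2) =>
    refine pat_mono id (fun _ => 1) Function.injective_id
      (fin1_inj _) ?_ (chain hUH hRC hBC hD hDt k).2.2.1
    intro j i; simp

lemma exists_perm_pair {n : ℕ} (a b c d : Fin n) (hab : a ≠ b) (hcd : c ≠ d) :
    ∃ σ : Equiv.Perm (Fin n), σ a = c ∧ σ b = d := by
  classical
  set σ₁ := Equiv.swap a c with hσ₁
  have hb'c : σ₁ b ≠ c := by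
    intro h
    have : σ₁ b = σ₁ a := by rw [h, hσ₁, Equiv.swap_apply_left]
    exact hab (σ₁.injective this).symm
  refine ⟨σ₁.trans (Equiv.swap (σ₁ b) d), ?_, ?_⟩
  · have : σ₁ a = c := Equiv.swap_apply_left a c
    simp only [Equiv.trans_apply, this]
    exact Equiv.swap_apply_of_ne_of_ne hb'c.symm hcd
  · simp only [Equiv.trans_apply]
    exact Equiv.swap_apply_left _ _

/-- Every single-blue pattern over a red clique is realized. -/
lemma grid (hUH : Ultrahomogeneous G red) (hRC : IsUnionOfCliques G {v | red v})
    (hBC : IsUnionOfCliques G {v | ¬ red v})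
    (hD : Realizes G red Dgraph Dred) (hDt : Realizes G red Dtilde Dred) :
    ∀ (n : ℕ) (P : Fin (n+1) → Prop), Pat G red (n+1) 1 ![P] := by
  intro n
  induction n with
  | zero =>
    intro P
    by_cases h : P 0
    · refine pat_congr ?_ (full_pat hUH hRC hBC hD hDt 0)
      intro j i
      have hi : i = 0 := Fin.ext (by have := i.isLt; omega)
      subst hi
      simp [h]
    · refine pat_congr ?_ (empty_pat hUH hRC hBC hD hDt 0)
      intro j i
      have hi : i = 0 := Fin.ext (by have := i.isLt; omega)
      subst hi
      simp [h]
  | succ k IH =>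
    intro P
    by_cases hall : ∀ i, P i
    · refine pat_congr ?_ (full_pat hUH hRC hBC hD hDt (k+1))
      intro j i; simp [hall i]
    by_cases hnone : ∀ i, ¬ P i
    · refine pat_congr ?_ (empty_pat hUH hRC hBC hD hDt (k+1))
      intro j i; simp [hnone i]
    push_neg at hall hnone
    obtain ⟨m₀, hm₀⟩ := hall
    obtain ⟨h₀, hh₀⟩ := hnone
    have hne : h₀ ≠ m₀ := fun h => hm₀ (h ▸ hh₀)
    rcases Nat.eq_zero_or_pos k with rfl | hk
    · -- size 2, mixed
      have h0 : Pat G red 2 1 ![fun i => i.val = 0] := by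
        refine pat_mono id (fun _ => 1) Function.injective_id
          (fin1_inj _) ?_ (patD_of hD)
        intro j i; simp
      have h1 : Pat G red 2 1 ![fun i => i.val = 1] := by
        refine pat_mono id (fun _ => 0) Function.injective_id
          (fin1_inj _) ?_ (patDt_of hDt)
        intro j i; simp
      fin_cases h₀ <;> fin_cases m₀
      · exact absurd rfl hne
      · refine pat_congr ?_ h0
        intro j i
        fin_cases i
        · simpa using hh₀
        · simpa using (iff_false_intro hm₀).symm
      · refine pat_congr ?_ h1
        intro j i
        fin_cases i
        · simpa using (iff_false_intro hm₀).symm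
        · simpa using hh₀
      · exact absurd rfl hne
    · -- size ≥ 3, mixed
      obtain ⟨σ, hσ1, hσ2⟩ := exists_perm_pair (⟨k, by omega⟩ : Fin (k+2)) ⟨k+1, by omega⟩
        h₀ m₀ (by intro h; have := congrArg Fin.val h; simp at this) hne
      set Q : Fin (k+2) → Prop := fun i => P (σ i) with hQ
      have hout : Pat G red (k+2) 1 ![Q] := by
        refine am_red hUH hRC hk
          (B₁ := ![fun i : Fin (k+1) => Q ⟨i.val, by omega⟩])
          (B₂ := ![fun i : Fin (k+1) => i.val < k ∧ Q ⟨i.val, by omega⟩])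
          ?_ ?_ ?_ ?_ (IH _) (IH _)
        · intro j i h
          fin_cases j
          simp [h]
        · refine ⟨0, ?_⟩
          simp only [Matrix.cons_val_zero, Fin.val_last]
          have hQk : Q ⟨k, by omega⟩ := by
            show P (σ ⟨k, by omega⟩)
            rw [hσ1]; exact hh₀
          simp [hQk]
        · intro j i h
          fin_cases j
          simp only [Matrix.cons_val_zero]
          exact iff_of_eq (congrArg Q (Fin.ext rfl))
        · intro j
          fin_cases j
          simp only [Matrix.cons_val_zero, Fin.val_last]
          have hQm : ¬ Q ⟨k+1, by omega⟩ := by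
            show ¬ P (σ ⟨k+1, by omega⟩)
            rw [hσ2]; exact hm₀
          simp [hQm]
      refine pat_mono σ.symm id σ.symm.injective Function.injective_id ?_ hout
      intro j i
      simp [hQ, Equiv.apply_symm_apply]

end Machinery

/-- in a basic CUH graph realizing `D` and `D̃`, for every `1 ≤ ℓ ≤ ω_R`,
every graph consisting of one blue vertex (`none`), a red `ℓ`-clique (the `some`s) and an
arbitrary set `A` of cross edges is realized. -/
theorem stmt_6 {V : Type} (G : SimpleGraph V) (red : V → Prop)
    (hG : IsBasicCUH G red)
    (hD : Realizes G red Dgraph Dred) (hDt : Realizes G red Dtilde Dred)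
    (ℓ : ℕ) (hℓ : 0 < ℓ)
    (hωR : ∀ M : Set V, IsMaxCliqueIn G {v | red v} M → (ℓ : Cardinal) ≤ Cardinal.mk M) :
    ∀ A : Set (Fin ℓ),
      Realizes G red
        (SimpleGraph.fromRel (fun x y : Option (Fin ℓ) =>
          (x ≠ none ∧ y ≠ none) ∨ (∃ a ∈ A, x = none ∧ y = some a)))
        (fun x => x ≠ none) := by
  intro A
  obtain ⟨n, rfl⟩ : ∃ n, ℓ = n + 1 := ⟨ℓ - 1, by omega⟩
  have hUH : Ultrahomogeneous G red := hG.1.2.2.1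
  have hRC : IsUnionOfCliques G {v | red v} := hG.1.2.2.2.1
  have hBC : IsUnionOfCliques G {v | ¬ red v} := hG.1.2.2.2.2
  obtain ⟨r, b, hri, hbi, hrr, hbb, hrc, hbc, hx⟩ :=
    grid hUH hRC hBC hD hDt n (fun i => i ∈ A)
  have radj : ∀ i i', G.Adj (r i) (r i') ↔ i ≠ i' := fun i i' =>
    ⟨fun h hh => (G.ne_of_adj h) (congrArg r hh), hrc i i'⟩
  have hx0 : ∀ i, G.Adj (b 0) (r i) ↔ i ∈ A := by
    intro i
    rw [hx]
    simp
  refine ⟨fun x => x.elim (b 0) r, ?_, ?_, ?_⟩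
  · intro x y h
    match x, y with
    | none, none => rfl
    | some i, some i' =>
      simp only [Option.elim] at h
      rw [hri h]
    | some i, none =>
      simp only [Option.elim] at h
      exact absurd (h ▸ hrr i) (hbb 0)
    | none, some i =>
      simp only [Option.elim] at h
      exact absurd (h ▸ hbb 0) (not_not_intro (hrr i))
  · intro w
    match w with
    | some i => exact iff_of_true (hrr i) (by simp)
    | none => exact iff_of_false (hbb 0) (by simp)
  · intro u w
    rw [SimpleGraph.fromRel_adj]
    match u, w with
    | none, none =>
      simp only [Option.elim]
      exact iff_of_false (G.irrefl) (by simp)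
    | some i, none =>
      simp only [Option.elim]
      rw [G.adj_comm, hx0]
      simp
    | none, some i =>
      simp only [Option.elim]
      rw [hx0]
      simp
    | some i, some i' =>
      simp only [Option.elim]
      rw [radj]
      simp
end

section
/- Let G be a basic CUH graph that omits D and in which at least one color class does not form an independent set. Then T_r is minimally omitted in G if and only if T̃_r is minimally omitted in G, and this holds precisely when ω_R = 2. -/
open SimpleGraph

namespace Stmt9

variable {V : Type} {G : SimpleGraph V} {red : V → Prop}

def grp (G : SimpleGraph V) (col : V → Prop) (v : V) : Set V :=
  {w | col w ∧ (w = v ∨ G.Adj v w)}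

lemma mem_grp_self {col : V → Prop} {v : V} (h : col v) : v ∈ grp G col v := ⟨h, Or.inl rfl⟩

lemma grp_col {col : V → Prop} {v w : V} (h : w ∈ grp G col v) : col w := h.1

lemma mem_grp_symm {col : V → Prop} {v w : V} (hv : col v) (h : w ∈ grp G col v) :
    v ∈ grp G col w := by
  rcases h.2 with h2 | h2
  · exact ⟨hv, Or.inl h2.symm⟩
  · exact ⟨hv, Or.inr h2.symm⟩

lemma mem_grp_trans {col : V → Prop} (hUC : IsUnionOfCliques G {v | col v}) {v w z : V}
    (hv : col v) (hw : w ∈ grp G col v) (hz : z ∈ grp G col w) : z ∈ grp G col v := by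
  refine ⟨hz.1, ?_⟩
  by_cases hzv : z = v
  · exact Or.inl hzv
  right
  rcases hw.2 with hwv | hwv
  · subst hwv
    rcases hz.2 with h | h
    · exact absurd h hzv
    · exact h
  · rcases hz.2 with h | h
    · subst h; exact hwv
    · exact hUC v hv w hw.1 z hz.1 hwv h (fun h' => hzv h'.symm)

lemma adj_of_mem_grp {col : V → Prop} (hUC : IsUnionOfCliques G {v | col v}) {v y z : V}
    (hv : col v) (hy : y ∈ grp G col v) (hz : z ∈ grp G col v) (hyz : y ≠ z) : G.Adj y z := by
  have hzy : z ∈ grp G col y := mem_grp_trans hUC hy.1 (mem_grp_symm hv hy) hz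
  rcases hzy.2 with h | h
  · exact absurd h.symm hyz
  · exact h

lemma grp_eq_of_mem {col : V → Prop} (hUC : IsUnionOfCliques G {v | col v}) {v w : V}
    (hv : col v) (hw : w ∈ grp G col v) : grp G col w = grp G col v := by
  ext z
  exact ⟨fun hz => mem_grp_trans hUC hv hw hz,
    fun hz => mem_grp_trans hUC hw.1 (mem_grp_symm hv hw) hz⟩

lemma t1 (hUH : Ultrahomogeneous G red) {u v : V} (h : red u ↔ red v) :
    ∃ ψ : G ≃g G, (∀ w, red (ψ w) ↔ red w) ∧ ψ u = v := by
  obtain ⟨ψ, h1, h2⟩ := hUH {u} (Set.finite_singleton u) (fun _ => v)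
    ⟨fun a ha b hb _ => by
        rw [Set.mem_singleton_iff] at ha hb; rw [ha, hb],
     fun a ha => by rw [Set.mem_singleton_iff] at ha; subst ha; exact h.symm,
     fun a ha b hb => by
        rw [Set.mem_singleton_iff] at ha hb; subst ha; subst hb; simp⟩
  exact ⟨ψ, h1, h2 u rfl⟩

lemma t2 (hUH : Ultrahomogeneous G red) {u1 u2 v1 v2 : V} (hu : u1 ≠ u2) (hv : v1 ≠ v2)
    (hc1 : red u1 ↔ red v1) (hc2 : red u2 ↔ red v2)
    (ha : G.Adj u1 u2 ↔ G.Adj v1 v2) :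
    ∃ ψ : G ≃g G, (∀ w, red (ψ w) ↔ red w) ∧ ψ u1 = v1 ∧ ψ u2 = v2 := by
  classical
  set f : V → V := fun x => if x = u1 then v1 else v2 with hf
  have hS : ∀ x ∈ ({u1, u2} : Set V), x = u1 ∨ x = u2 := by
    intro x hx; simpa using hx
  have hf1 : f u1 = v1 := by simp [hf]
  have hf2 : f u2 = v2 := by simp [hf, hu.symm]
  have hfx : ∀ x ∈ ({u1, u2} : Set V), (x = u1 ∧ f x = v1) ∨ (x = u2 ∧ f x = v2) := by
    intro x hx
    rcases hS x hx with h | h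
    · subst h; exact Or.inl ⟨rfl, hf1⟩
    · subst h; exact Or.inr ⟨rfl, hf2⟩
  have hpi : IsPartialIso G red {u1, u2} f := by
    refine ⟨?_, ?_, ?_⟩
    · intro a haS b hbS hab
      rcases hfx a haS with ⟨h, hfa⟩ | ⟨h, hfa⟩ <;> rcases hfx b hbS with ⟨h', hfb⟩ | ⟨h', hfb⟩ <;>
        rw [hfa, hfb] at hab <;>
        first | exact h.trans h'.symm | exact absurd hab hv | exact absurd hab.symm hv
    · intro a haS
      rcases hfx a haS with ⟨h, hfa⟩ | ⟨h, hfa⟩ <;> rw [hfa, h]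
      · exact hc1.symm
      · exact hc2.symm
    · intro a haS b hbS
      rcases hfx a haS with ⟨h, hfa⟩ | ⟨h, hfa⟩ <;> rcases hfx b hbS with ⟨h', hfb⟩ | ⟨h', hfb⟩ <;>
        rw [hfa, hfb, h, h'] <;>
        first
          | simp
          | exact ha.symm
          | (rw [G.adj_comm v2 v1, G.adj_comm u2 u1]; exact ha.symm)
  obtain ⟨ψ, h1, h2⟩ := hUH {u1, u2} ((Set.finite_singleton u2).insert u1) f hpi
  exact ⟨ψ, h1, by rw [h2 u1 (by simp), hf1], by rw [h2 u2 (by simp), hf2]⟩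

lemma t3 (hUH : Ultrahomogeneous G red) {u1 u2 u3 v1 v2 v3 : V}
    (hu12 : u1 ≠ u2) (hu13 : u1 ≠ u3) (hu23 : u2 ≠ u3)
    (hv12 : v1 ≠ v2) (hv13 : v1 ≠ v3) (hv23 : v2 ≠ v3)
    (hc1 : red u1 ↔ red v1) (hc2 : red u2 ↔ red v2) (hc3 : red u3 ↔ red v3)
    (ha12 : G.Adj u1 u2 ↔ G.Adj v1 v2) (ha13 : G.Adj u1 u3 ↔ G.Adj v1 v3)
    (ha23 : G.Adj u2 u3 ↔ G.Adj v2 v3) :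
    ∃ ψ : G ≃g G, (∀ w, red (ψ w) ↔ red w) ∧ ψ u1 = v1 ∧ ψ u2 = v2 ∧ ψ u3 = v3 := by
  classical
  set f : V → V := fun x => if x = u1 then v1 else if x = u2 then v2 else v3 with hf
  have hf1 : f u1 = v1 := by simp [hf]
  have hf2 : f u2 = v2 := by simp [hf, hu12.symm]
  have hf3 : f u3 = v3 := by simp [hf, hu13.symm, hu23.symm]
  have hfx : ∀ x ∈ ({u1, u2, u3} : Set V),
      (x = u1 ∧ f x = v1) ∨ (x = u2 ∧ f x = v2) ∨ (x = u3 ∧ f x = v3) := by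
    intro x hx
    simp only [Set.mem_insert_iff, Set.mem_singleton_iff] at hx
    rcases hx with h | h | h
    · exact Or.inl ⟨h, h ▸ hf1⟩
    · exact Or.inr (Or.inl ⟨h, h ▸ hf2⟩)
    · exact Or.inr (Or.inr ⟨h, h ▸ hf3⟩)
  have hpi : IsPartialIso G red {u1, u2, u3} f := by
    refine ⟨?_, ?_, ?_⟩
    · intro a haS b hbS hab
      rcases hfx a haS with ⟨h, hfa⟩ | ⟨h, hfa⟩ | ⟨h, hfa⟩ <;>
        rcases hfx b hbS with ⟨h', hfb⟩ | ⟨h', hfb⟩ | ⟨h', hfb⟩ <;>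
        rw [hfa, hfb] at hab <;>
        first
          | exact h.trans h'.symm
          | exact absurd hab hv12 | exact absurd hab.symm hv12
          | exact absurd hab hv13 | exact absurd hab.symm hv13
          | exact absurd hab hv23 | exact absurd hab.symm hv23
    · intro a haS
      rcases hfx a haS with ⟨h, hfa⟩ | ⟨h, hfa⟩ | ⟨h, hfa⟩ <;> rw [hfa, h]
      · exact hc1.symm
      · exact hc2.symm
      · exact hc3.symm
    · intro a haS b hbS
      rcases hfx a haS with ⟨h, hfa⟩ | ⟨h, hfa⟩ | ⟨h, hfa⟩ <;>
        rcases hfx b hbS with ⟨h', hfb⟩ | ⟨h', hfb⟩ | ⟨h', hfb⟩ <;>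
        rw [hfa, hfb, h, h'] <;>
        first
          | simp
          | exact ha12.symm | (rw [G.adj_comm v2 v1, G.adj_comm u2 u1]; exact ha12.symm)
          | exact ha13.symm | (rw [G.adj_comm v3 v1, G.adj_comm u3 u1]; exact ha13.symm)
          | exact ha23.symm | (rw [G.adj_comm v3 v2, G.adj_comm u3 u2]; exact ha23.symm)
  obtain ⟨ψ, h1, h2⟩ := hUH {u1, u2, u3}
    (((Set.finite_singleton u3).insert u2).insert u1) f hpi
  exact ⟨ψ, h1, by rw [h2 u1 (by simp), hf1], by rw [h2 u2 (by simp), hf2],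
    by rw [h2 u3 (by simp), hf3]⟩

lemma realizes_mono {W : Type} {H : SimpleGraph W} {redH : W → Prop} {S T : Set W}
    (hST : S ⊆ T) (h : Realizes G red (H.induce T) (fun x => redH x.1)) :
    Realizes G red (H.induce S) (fun x => redH x.1) := by
  obtain ⟨f, hinj, hcol, hadj⟩ := h
  refine ⟨fun x => f (Set.inclusion hST x), ?_, ?_, ?_⟩
  · intro t t' htt'
    exact Set.inclusion_injective hST (hinj htt')
  · intro w; exact hcol _
  · intro u w
    rw [hadj]
    simp [SimpleGraph.induce, SimpleGraph.comap_adj]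

lemma realizes_pair {W : Type} {H : SimpleGraph W} {redH : W → Prop}
    {a b : W} (hab : a ≠ b) {x y : V} (hxy : x ≠ y)
    (hca : red x ↔ redH a) (hcb : red y ↔ redH b) (hadj : G.Adj x y ↔ H.Adj a b) :
    Realizes G red (H.induce {a, b}) (fun t => redH t.1) := by
  classical
  have hval : ∀ t : ↥({a, b} : Set W),
      (t.1 = a ∧ (if t.1 = a then x else y) = x) ∨
      (t.1 = b ∧ (if t.1 = a then x else y) = y) := by
    intro t
    have ht : t.1 = a ∨ t.1 = b := by
      have h2 := t.2
      rwa [Set.mem_insert_iff, Set.mem_singleton_iff] at h2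
    rcases ht with ht | ht
    · exact Or.inl ⟨ht, if_pos ht⟩
    · exact Or.inr ⟨ht, if_neg (by rw [ht]; exact Ne.symm hab)⟩
  have hind : ∀ (t t' : ↥({a, b} : Set W)),
      ((H.induce {a, b}).Adj t t' ↔ H.Adj t.1 t'.1) := by
    intro t t'; simp [SimpleGraph.induce, SimpleGraph.comap_adj]
  refine ⟨fun t => if t.1 = a then x else y, ?_, ?_, ?_⟩
  · intro t t' h
    dsimp only at h
    rcases hval t with ⟨ht, he⟩ | ⟨ht, he⟩ <;> rcases hval t' with ⟨ht', he'⟩ | ⟨ht', he'⟩ <;>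
      rw [he, he'] at h <;>
      first
        | exact Subtype.ext (ht.trans ht'.symm)
        | exact absurd h hxy | exact absurd h.symm hxy
  · intro t
    dsimp only
    rcases hval t with ⟨ht, he⟩ | ⟨ht, he⟩ <;> rw [he, ht]
    · exact hca
    · exact hcb
  · intro t t'
    dsimp only
    rw [hind t t']
    rcases hval t with ⟨ht, he⟩ | ⟨ht, he⟩ <;> rcases hval t' with ⟨ht', he'⟩ | ⟨ht', he'⟩ <;>
      rw [he, he', ht, ht'] <;>
      first
        | simp
        | exact hadj
        | (rw [G.adj_comm y x, H.adj_comm b a]; exact hadj)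

lemma realizes_pair_extract {W : Type} {H : SimpleGraph W} {redH : W → Prop} (a b : W)
    (hab : a ≠ b) (h : Realizes G red (H.induce {a, b}) (fun t => redH t.1)) :
    ∃ x y : V, x ≠ y ∧ (red x ↔ redH a) ∧ (red y ↔ redH b) ∧ (G.Adj x y ↔ H.Adj a b) := by
  obtain ⟨f, hinj, hcol, hadj⟩ := h
  have haS : a ∈ ({a, b} : Set W) := by simp
  have hbS : b ∈ ({a, b} : Set W) := by simp
  refine ⟨f ⟨a, haS⟩, f ⟨b, hbS⟩, ?_, hcol ⟨a, haS⟩, hcol ⟨b, hbS⟩, ?_⟩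
  · intro he
    exact hab (congrArg Subtype.val (hinj he))
  · rw [hadj]
    simp [SimpleGraph.induce, SimpleGraph.comap_adj]

lemma fin3_cases_ne : ∀ i x : Fin 3, x ≠ i →
    (i = 0 → x ∈ ({1, 2} : Set (Fin 3))) ∧
    (i = 1 → x ∈ ({0, 2} : Set (Fin 3))) ∧
    (i = 2 → x ∈ ({0, 1} : Set (Fin 3))) := by
  intro i x h
  refine ⟨?_, ?_, ?_⟩ <;> intro hi <;> subst hi <;>
    simp only [Set.mem_insert_iff, Set.mem_singleton_iff] <;>
    revert h <;> revert x <;> decide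

lemma minOmitted_realize {H : SimpleGraph (Fin 3)} {redH : Fin 3 → Prop}
    (h01 : Realizes G red (H.induce {0, 1}) (fun t => redH t.1))
    (h02 : Realizes G red (H.induce {0, 2}) (fun t => redH t.1))
    (h12 : Realizes G red (H.induce {1, 2}) (fun t => redH t.1)) :
    ∀ S : Set (Fin 3), S ≠ Set.univ → Realizes G red (H.induce S) (fun x => redH x.1) := by
  intro S hS
  obtain ⟨i, hi⟩ := (Set.ne_univ_iff_exists_notMem S).mp hS
  fin_cases i
  · exact realizes_mono (fun x hx => (fin3_cases_ne 0 x (fun h => hi (by rwa [h] at hx))).1 rfl) h12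
  · exact realizes_mono (fun x hx => (fin3_cases_ne 1 x (fun h => hi (by rwa [h] at hx))).2.1 rfl) h02
  · exact realizes_mono (fun x hx => (fin3_cases_ne 2 x (fun h => hi (by rwa [h] at hx))).2.2 rfl) h01

lemma mk_pair_two {a b : V} (hab : a ≠ b) : Cardinal.mk ↥({a, b} : Set V) = 2 := by
  rw [Cardinal.mk_insert (by simpa using hab), Cardinal.mk_singleton]
  exact one_add_one_eq_two

lemma pair_of_mk_two {S : Set V} (h : Cardinal.mk S = 2) : ∃ a b, a ≠ b ∧ S = {a, b} := by
  rw [Cardinal.mk_eq_two_iff] at h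
  obtain ⟨x, y, hxy, hU⟩ := h
  refine ⟨x.1, y.1, fun he => hxy (Subtype.ext he), ?_⟩
  ext z
  constructor
  · intro hz
    have hm : (⟨z, hz⟩ : S) ∈ ({x, y} : Set S) := hU ▸ Set.mem_univ _
    rcases hm with hm | hm
    · exact Or.inl (congrArg Subtype.val hm)
    · exact Or.inr (congrArg Subtype.val hm)
  · intro hz
    rcases hz with hz | hz
    · rw [hz]; exact x.2
    · rw [hz]; exact y.2

lemma grp_isMaxClique (hUC : IsUnionOfCliques G {v | red v}) {u : V} (hu : red u) :
    IsMaxCliqueIn G {v | red v} (grp G red u) := by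
  refine ⟨fun w hw => hw.1, ?_, ?_⟩
  · intro y hy z hz hyz
    exact adj_of_mem_grp hUC hu hy hz hyz
  · intro M' hM'red hM'cl hsub
    ext z
    constructor
    · exact fun hz => hsub hz
    · intro hz
      refine ⟨hM'red hz, ?_⟩
      by_cases hzu : z = u
      · exact Or.inl hzu
      · exact Or.inr (hM'cl (hsub (mem_grp_self hu)) hz (fun h => hzu h.symm))

lemma maxclique_eq_grp (hUC : IsUnionOfCliques G {v | red v}) {M : Set V}
    (hM : IsMaxCliqueIn G {v | red v} M) {u : V} (hu : u ∈ M) : M = grp G red u := by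
  have hured : red u := hM.1 hu
  apply hM.2.2 (grp G red u) (fun w hw => hw.1) (grp_isMaxClique hUC hured).2.1
  intro z hz
  refine ⟨hM.1 hz, ?_⟩
  by_cases hzu : z = u
  · exact Or.inl hzu
  · exact Or.inr (hM.2.1 hu hz (fun h => hzu h.symm))

lemma maxclique_nonempty {r : V} (hr : red r) {M : Set V}
    (hM : IsMaxCliqueIn G {v | red v} M) : M.Nonempty := by
  by_contra hne
  rw [Set.not_nonempty_iff_eq_empty] at hne
  subst hne
  have := hM.2.2 {r} (by simpa using hr) (SimpleGraph.isClique_singleton r)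
    (Set.empty_subset _)
  exact (Set.singleton_ne_empty r) this.symm
lemma ne_of_col {x c : V} (hx : red x) (hc : ¬ red c) : x ≠ c := fun h => hc (h ▸ hx)

lemma realizes_Tr {u v b : V} (hu : red u) (hv : red v) (hb : ¬ red b)
    (huv : G.Adj u v) (hub : G.Adj u b) (hvb : G.Adj v b) :
    Realizes G red Tr TrRed := by
  refine ⟨![u, v, b], ?_, ?_, ?_⟩
  · intro i j hij
    fin_cases i <;> fin_cases j <;> simp only [] at hij ⊢ <;>
      first
      | rfl
      | exact absurd hij huv.ne | exact absurd hij.symm huv.ne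
      | exact absurd hij (ne_of_col hu hb) | exact absurd hij.symm (ne_of_col hu hb)
      | exact absurd hij (ne_of_col hv hb) | exact absurd hij.symm (ne_of_col hv hb)
  · intro w
    fin_cases w
    · simpa [TrRed] using hu
    · simpa [TrRed] using hv
    · simpa [TrRed] using hb
  · intro i j
    fin_cases i <;> fin_cases j <;>
      simp [Tr, huv, hub, hvb, huv.symm, hub.symm, hvb.symm]

lemma realizes_TrTilde {u v b : V} (hu : red u) (hv : red v) (hb : ¬ red b)
    (huv : G.Adj u v) (hub : ¬ G.Adj u b) (hvb : ¬ G.Adj v b) :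
    Realizes G red TrTilde TrRed := by
  have hub' : ¬ G.Adj b u := fun h => hub h.symm
  have hvb' : ¬ G.Adj b v := fun h => hvb h.symm
  refine ⟨![u, v, b], ?_, ?_, ?_⟩
  · intro i j hij
    fin_cases i <;> fin_cases j <;> simp only [] at hij ⊢ <;>
      first
      | rfl
      | exact absurd hij huv.ne | exact absurd hij.symm huv.ne
      | exact absurd hij (ne_of_col hu hb) | exact absurd hij.symm (ne_of_col hu hb)
      | exact absurd hij (ne_of_col hv hb) | exact absurd hij.symm (ne_of_col hv hb)
  · intro w
    fin_cases w
    · simpa [TrRed] using hu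
    · simpa [TrRed] using hv
    · simpa [TrRed] using hb
  · intro i j
    fin_cases i <;> fin_cases j <;>
      simp [TrTilde, SimpleGraph.fromRel_adj, huv, hub, hvb, huv.symm, hub', hvb',
        G.irrefl]

lemma Tr_extract (h : Realizes G red Tr TrRed) :
    ∃ u v b, red u ∧ red v ∧ ¬ red b ∧ G.Adj u v ∧ G.Adj u b ∧ G.Adj v b := by
  obtain ⟨f, hinj, hcol, hadj⟩ := h
  refine ⟨f 0, f 1, f 2, ?_, ?_, ?_, ?_, ?_, ?_⟩
  · simpa [TrRed] using hcol 0
  · simpa [TrRed] using hcol 1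
  · simpa [TrRed] using hcol 2
  · simpa [Tr] using hadj 0 1
  · simpa [Tr] using hadj 0 2
  · simpa [Tr] using hadj 1 2

lemma TrTilde_extract (h : Realizes G red TrTilde TrRed) :
    ∃ u v b, red u ∧ red v ∧ ¬ red b ∧ G.Adj u v ∧ ¬ G.Adj u b ∧ ¬ G.Adj v b := by
  obtain ⟨f, hinj, hcol, hadj⟩ := h
  refine ⟨f 0, f 1, f 2, ?_, ?_, ?_, ?_, ?_, ?_⟩
  · simpa [TrRed] using hcol 0
  · simpa [TrRed] using hcol 1
  · simpa [TrRed] using hcol 2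
  · simpa [TrTilde, SimpleGraph.fromRel_adj] using hadj 0 1
  · simpa [TrTilde, SimpleGraph.fromRel_adj] using hadj 0 2
  · simpa [TrTilde, SimpleGraph.fromRel_adj] using hadj 1 2

lemma omegaR2_iff (hUC : IsUnionOfCliques G {v | red v}) {r0 : V} (hr0 : red r0) :
    (∀ M : Set V, IsMaxCliqueIn G {v | red v} M → Cardinal.mk M = 2) ↔
    (∀ u, red u → ∃ v, (red v ∧ G.Adj u v) ∧ ∀ w, red w → G.Adj u w → w = v) := by
  constructor
  · intro h u hu
    obtain ⟨a, b, hab, hgrp⟩ := pair_of_mk_two (h _ (grp_isMaxClique hUC hu))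
    have humem : u ∈ ({a, b} : Set V) := hgrp ▸ mem_grp_self hu
    have hmem : ∀ w : V, red w → G.Adj u w → (w = a ∨ w = b) := by
      intro w hw hadj
      have : w ∈ ({a, b} : Set V) := hgrp ▸ (⟨hw, Or.inr hadj⟩ : w ∈ grp G red u)
      simpa using this
    have hmema : a ∈ grp G red u := by rw [hgrp]; exact Or.inl rfl
    have hmemb : b ∈ grp G red u := by rw [hgrp]; exact Or.inr rfl
    rcases humem with h1 | h1
    · -- u = a, partner is b
      refine ⟨b, ⟨hmemb.1, ?_⟩, ?_⟩
      · rcases hmemb.2 with h2 | h2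
        · exact absurd (h2.trans h1) (Ne.symm hab)
        · exact h2
      · intro w hw hadj
        rcases hmem w hw hadj with h2 | h2
        · exact absurd (h2.trans h1.symm) (G.ne_of_adj hadj).symm
        · exact h2
    · -- u = b, partner is a
      refine ⟨a, ⟨hmema.1, ?_⟩, ?_⟩
      · rcases hmema.2 with h2 | h2
        · exact absurd (h2.trans h1) hab
        · exact h2
      · intro w hw hadj
        rcases hmem w hw hadj with h2 | h2
        · exact h2
        · exact absurd (h2.trans h1.symm) (G.ne_of_adj hadj).symm
  · intro h M hM
    obtain ⟨z, hz⟩ := maxclique_nonempty hr0 hM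
    rw [maxclique_eq_grp hUC hM hz]
    obtain ⟨v, ⟨hvred, hvadj⟩, huniq⟩ := h z (hM.1 hz)
    have hgv : grp G red z = {z, v} := by
      ext w
      constructor
      · intro hw
        rcases hw.2 with h2 | h2
        · exact Or.inl h2
        · exact Or.inr (huniq w hw.1 h2)
      · intro hw
        rcases hw with h2 | h2
        · rw [h2]; exact mem_grp_self (hM.1 hz)
        · rw [h2]; exact ⟨hvred, Or.inr hvadj⟩
    rw [hgv]
    exact mk_pair_two (G.ne_of_adj hvadj)
lemma blowup_of_uniform [Nonempty V] (col : V → Prop)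
    (hUC : IsUnionOfCliques G {v | col v})
    (I : Type) (hI2 : 2 ≤ Cardinal.mk I) (hIa : Cardinal.mk I ≤ Cardinal.aleph0)
    (hbij : ∀ v, col v → Nonempty (I ≃ ↥(grp G col v)))
    (hnbhd : ∀ u v, col u → col v → G.Adj u v → ∀ x, ¬ col x → (G.Adj x u ↔ G.Adj x v)) :
    IsBlowUpOf G col := by
  classical
  let repS : Set V → V := fun S => if h : S.Nonempty then h.some else Classical.arbitrary V
  let rep : V → V := fun v => repS (grp G col v)
  have hrep_mem : ∀ v, col v → rep v ∈ grp G col v := by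
    intro v hv
    have hne : (grp G col v).Nonempty := ⟨v, mem_grp_self hv⟩
    show repS (grp G col v) ∈ grp G col v
    rw [show repS (grp G col v) = hne.some from dif_pos hne]
    exact hne.some_mem
  have hrep_col : ∀ v, col v → col (rep v) := fun v hv => (hrep_mem v hv).1
  have hgrp_rep : ∀ v, col v → grp G col (rep v) = grp G col v := fun v hv =>
    grp_eq_of_mem hUC hv (hrep_mem v hv)
  have hrep_eq : ∀ v w, grp G col v = grp G col w → rep v = rep w := by
    intro v w h; show repS _ = repS _; rw [h]
  have hrep_idem : ∀ v, col v → rep (rep v) = rep v := fun v hv =>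
    hrep_eq _ _ (hgrp_rep v hv)
  have hadj_grp : ∀ v w, col v → col w → G.Adj v w →
      (grp G col v = grp G col w ∧ v ≠ w) := by
    intro v w hv hw h
    exact ⟨(grp_eq_of_mem hUC hv ⟨hw, Or.inr h⟩).symm, h.ne⟩
  have hgrp_adj : ∀ v w, col v → col w → grp G col v = grp G col w → v ≠ w → G.Adj v w := by
    intro v w hv hw hg hne
    have hm : w ∈ grp G col v := by rw [hg]; exact mem_grp_self hw
    rcases hm.2 with h | h
    · exact absurd h.symm hne
    · exact h
  -- the underlying type: colored vertices must be canonical representatives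
  let U := {v : V // col v → v = rep v}
  let H : SimpleGraph U := G.comap Subtype.val
  let redH : U → Prop := fun u => col u.1
  have hHadj : ∀ u u' : U, H.Adj u u' ↔ G.Adj u.1 u'.1 := fun u u' => Iff.rfl
  have hHind : ∀ u u' : U, redH u → redH u' → ¬ H.Adj u u' := by
    intro u u' hu hu' hadj
    have h1 := hadj_grp u.1 u'.1 hu hu' ((hHadj u u').mp hadj)
    have : u.1 = u'.1 := by
      rw [u.2 hu, u'.2 hu', hrep_eq _ _ h1.1]
    exact h1.2 this
  let F : (w : V) → col w → (I ≃ ↥(grp G col w)) := fun w h => (hbij w h).some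
  -- forward and backward maps
  let BT := ({u : U // redH u} × I ⊕ {u : U // ¬ redH u})
  let fwd : V → BT := fun v =>
    if h : col v then
      Sum.inl (⟨⟨rep v, fun _ => (hrep_idem v h).symm⟩, hrep_col v h⟩,
        (F (rep v) (hrep_col v h)).symm
          ⟨v, by rw [hgrp_rep v h]; exact mem_grp_self h⟩)
    else Sum.inr ⟨⟨v, fun hc => absurd hc h⟩, h⟩
  let bwd : BT → V := fun x =>
    match x with
    | Sum.inl (u, i) => ((F u.1.1 u.2) i).1
    | Sum.inr b => b.1.1
  have hbwd_inl : ∀ (u : {u : U // redH u}) (i : I), bwd (Sum.inl (u, i)) = ((F u.1.1 u.2) i).1 :=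
    fun u i => rfl
  have hbwd_mem : ∀ (u : {u : U // redH u}) (i : I),
      bwd (Sum.inl (u, i)) ∈ grp G col u.1.1 := fun u i => ((F u.1.1 u.2) i).2
  -- right inverse : bwd ∘ fwd = id
  have hright : ∀ v, bwd (fwd v) = v := by
    intro v
    by_cases h : col v
    · show bwd (fwd v) = v
      rw [show fwd v = Sum.inl (⟨⟨rep v, fun _ => (hrep_idem v h).symm⟩, hrep_col v h⟩,
        (F (rep v) (hrep_col v h)).symm
          ⟨v, by rw [hgrp_rep v h]; exact mem_grp_self h⟩) from dif_pos h]
      show ((F (rep v) (hrep_col v h))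
        ((F (rep v) (hrep_col v h)).symm ⟨v, _⟩)).1 = v
      rw [Equiv.apply_symm_apply]
    · show bwd (fwd v) = v
      rw [show fwd v = Sum.inr ⟨⟨v, fun hc => absurd hc h⟩, h⟩ from dif_neg h]
  -- left inverse : fwd ∘ bwd = id
  have hleft : ∀ x, fwd (bwd x) = x := by
    intro x
    match x with
    | Sum.inr b =>
      have hb : ¬ col b.1.1 := b.2
      show fwd b.1.1 = Sum.inr b
      rw [show fwd b.1.1 = Sum.inr ⟨⟨b.1.1, fun hc => absurd hc hb⟩, hb⟩ from dif_neg hb]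
    | Sum.inl (u, i) =>
      set v := ((F u.1.1 u.2) i).1 with hvdef
      have hvm : v ∈ grp G col u.1.1 := ((F u.1.1 u.2) i).2
      have hv : col v := hvm.1
      have hrep_v : rep v = u.1.1 := by
        have h1 : grp G col v = grp G col u.1.1 := grp_eq_of_mem hUC u.2 hvm
        rw [hrep_eq _ _ h1]
        exact (u.1.2 u.2).symm
      have hkey : ∀ (w : V) (hw : w = u.1.1) (pc : col w) (pm : v ∈ grp G col w),
          (F w pc).symm ⟨v, pm⟩ = i := by
        rintro w rfl pc pm
        rw [Equiv.symm_apply_eq]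
      show fwd v = Sum.inl (u, i)
      rw [show fwd v = Sum.inl (⟨⟨rep v, fun _ => (hrep_idem v hv).symm⟩, hrep_col v hv⟩,
        (F (rep v) (hrep_col v hv)).symm
          ⟨v, by rw [hgrp_rep v hv]; exact mem_grp_self hv⟩) from dif_pos hv]
      refine congrArg Sum.inl (Prod.ext ?_ ?_)
      · exact Subtype.ext (Subtype.ext hrep_v)
      · exact hkey (rep v) hrep_v (hrep_col v hv) _
  let e0 : BT ≃ V := ⟨bwd, fwd, hleft, hright⟩
  have hb_ll : ∀ (u : {u : U // redH u}) (i : I) (u' : {u : U // redH u}) (i' : I),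
      (blowUp H redH I).Adj (Sum.inl (u, i)) (Sum.inl (u', i')) ↔
      ((Sum.inl (u, i) : BT) ≠ Sum.inl (u', i') ∧
        ((H.Adj u.1 u'.1 ∨ (u = u' ∧ i ≠ i')) ∨ (H.Adj u'.1 u.1 ∨ (u' = u ∧ i' ≠ i)))) :=
    fun _ _ _ _ => Iff.rfl
  have hb_lr : ∀ (u : {u : U // redH u}) (i : I) (b : {u : U // ¬ redH u}),
      (blowUp H redH I).Adj (Sum.inl (u, i)) (Sum.inr b) ↔
      ((Sum.inl (u, i) : BT) ≠ Sum.inr b ∧ (H.Adj u.1 b.1 ∨ H.Adj b.1 u.1)) :=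
    fun _ _ _ => Iff.rfl
  have hb_rl : ∀ (b : {u : U // ¬ redH u}) (u : {u : U // redH u}) (i : I),
      (blowUp H redH I).Adj (Sum.inr b) (Sum.inl (u, i)) ↔
      ((Sum.inr b : BT) ≠ Sum.inl (u, i) ∧ (H.Adj b.1 u.1 ∨ H.Adj u.1 b.1)) :=
    fun _ _ _ => Iff.rfl
  have hb_rr : ∀ (b b' : {u : U // ¬ redH u}),
      (blowUp H redH I).Adj (Sum.inr b) (Sum.inr b') ↔
      ((Sum.inr b : BT) ≠ Sum.inr b' ∧ (H.Adj b.1 b'.1 ∨ H.Adj b'.1 b.1)) :=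
    fun _ _ => Iff.rfl
  -- adjacency correspondence for bwd
  have hmaprel : ∀ x y : BT, G.Adj (e0 x) (e0 y) ↔ (blowUp H redH I).Adj x y := by
    intro x y
    have he0 : ∀ z, e0 z = bwd z := fun z => rfl
    match x, y with
    | Sum.inl (u, i), Sum.inl (u', i') =>
      rw [he0, he0, hbwd_inl, hbwd_inl, hb_ll u i u' i']
      by_cases huu : u = u'
      · subst huu
        have hne_iff : (((F u.1.1 u.2) i).1 ≠ ((F u.1.1 u.2) i').1) ↔ i ≠ i' := by
          constructor
          · intro h hii
            exact h (by rw [hii])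
          · intro h he
            exact h (((F u.1.1 u.2).injective (Subtype.ext he)))
        constructor
        · intro hadj
          have hne : i ≠ i' := hne_iff.mp hadj.ne
          refine ⟨?_, Or.inl (Or.inr ⟨rfl, hne⟩)⟩
          intro hcon
          exact hne (congrArg Prod.snd (Sum.inl.inj hcon))
        · rintro ⟨hne0, hR⟩
          have hii : i ≠ i' := by
            rcases hR with (h | ⟨_, h⟩) | (h | ⟨_, h⟩)
            · exact absurd ((hHadj _ _).mp h) (G.irrefl)
            · exact h
            · exact absurd ((hHadj _ _).mp h) (G.irrefl)
            · exact fun he => h he.symm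
          exact hgrp_adj _ _ ((F u.1.1 u.2) i).2.1 ((F u.1.1 u.2) i').2.1
            (by rw [grp_eq_of_mem hUC u.2 ((F u.1.1 u.2) i).2,
                    grp_eq_of_mem hUC u.2 ((F u.1.1 u.2) i').2]) (hne_iff.mpr hii)
      · have hgg : grp G col u.1.1 ≠ grp G col u'.1.1 := by
          intro hg
          apply huu
          have h3 : u.1.1 = u'.1.1 := by
            rw [u.1.2 u.2, u'.1.2 u'.2]
            exact hrep_eq _ _ hg
          exact Subtype.ext (Subtype.ext h3)
        constructor
        · intro hadj
          exfalso
          have h1 := hadj_grp _ _ ((F u.1.1 u.2) i).2.1 ((F u'.1.1 u'.2) i').2.1 hadj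
          apply hgg
          rw [← grp_eq_of_mem hUC u.2 ((F u.1.1 u.2) i).2,
              ← grp_eq_of_mem hUC u'.2 ((F u'.1.1 u'.2) i').2]
          exact h1.1
        · intro hadj
          exfalso
          rcases hadj.2 with (h | ⟨h, _⟩) | (h | ⟨h, _⟩)
          · exact hgg ((hadj_grp _ _ u.2 u'.2 ((hHadj _ _).mp h)).1)
          · exact huu h
          · exact hgg ((hadj_grp _ _ u'.2 u.2 ((hHadj _ _).mp h)).1).symm
          · exact huu h.symm
    | Sum.inl (u, i), Sum.inr b =>
      rw [he0, he0, hbwd_inl, hb_lr u i b]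
      have hvm := ((F u.1.1 u.2) i).2
      have hcb : ¬ col b.1.1 := b.2
      have hiff : G.Adj ((F u.1.1 u.2) i).1 b.1.1 ↔ G.Adj u.1.1 b.1.1 := by
        rcases hvm.2 with h | h
        · rw [h]
        · rw [G.adj_comm ((F u.1.1 u.2) i).1 b.1.1, G.adj_comm u.1.1 b.1.1]
          exact (hnbhd u.1.1 ((F u.1.1 u.2) i).1 u.2 hvm.1 h b.1.1 hcb).symm
      rw [hiff]
      constructor
      · intro h
        exact ⟨fun hcon => (nomatch hcon), Or.inl ((hHadj _ _).mpr h)⟩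
      · rintro ⟨-, h | h⟩
        · exact (hHadj _ _).mp h
        · exact ((hHadj _ _).mp h).symm
    | Sum.inr b, Sum.inl (u, i) =>
      rw [he0, he0, hbwd_inl, hb_rl b u i]
      have hvm := ((F u.1.1 u.2) i).2
      have hcb : ¬ col b.1.1 := b.2
      have hiff : G.Adj b.1.1 ((F u.1.1 u.2) i).1 ↔ G.Adj b.1.1 u.1.1 := by
        rcases hvm.2 with h | h
        · rw [h]
        · exact (hnbhd u.1.1 ((F u.1.1 u.2) i).1 u.2 hvm.1 h b.1.1 hcb).symm
      rw [hiff]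
      constructor
      · intro h
        exact ⟨fun hcon => (nomatch hcon), Or.inl ((hHadj _ _).mpr h)⟩
      · rintro ⟨-, h | h⟩
        · exact (hHadj _ _).mp h
        · exact ((hHadj _ _).mp h).symm
    | Sum.inr b, Sum.inr b' =>
      rw [he0, he0, hb_rr b b']
      show G.Adj b.1.1 b'.1.1 ↔ _
      constructor
      · intro h
        refine ⟨?_, Or.inl ((hHadj _ _).mpr h)⟩
        intro hcon
        exact h.ne (congrArg (fun t => t.1.1) (Sum.inr.inj hcon))
      · rintro ⟨-, h | h⟩
        · exact (hHadj _ _).mp h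
        · exact ((hHadj _ _).mp h).symm
  let iso : (blowUp H redH I) ≃g G := ⟨e0, by intro a b; exact hmaprel a b⟩
  refine ⟨U, H, redH, I, hHind, hI2, hIa, iso.symm, ?_⟩
  intro v
  show col v ↔ blowUpRed U redH I (iso.symm v)
  have hsv : iso.symm v = fwd v := rfl
  rw [hsv]
  by_cases h : col v
  · rw [show fwd v = Sum.inl (⟨⟨rep v, fun _ => (hrep_idem v h).symm⟩, hrep_col v h⟩,
        (F (rep v) (hrep_col v h)).symm
          ⟨v, by rw [hgrp_rep v h]; exact mem_grp_self h⟩) from dif_pos h]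
    simpa [blowUpRed] using h
  · rw [show fwd v = Sum.inr ⟨⟨v, fun hc => absurd hc h⟩, h⟩ from dif_neg h]
    simpa [blowUpRed] using h
lemma symm_pres {col : V → Prop} (ψ : G ≃g G) (hp : ∀ w, col (ψ w) ↔ col w) :
    ∀ w, col (ψ.symm w) ↔ col w := by
  intro w
  have h := hp (ψ.symm w)
  rw [RelIso.apply_symm_apply] at h
  exact h.symm

lemma grp_equiv_nonempty {col : V → Prop} (ψ : G ≃g G) (hp : ∀ w, col (ψ w) ↔ col w) (x : V) :
    Nonempty (↥(grp G col x) ≃ ↥(grp G col (ψ x))) := by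
  have hps := symm_pres ψ hp
  refine ⟨⟨fun w => ⟨ψ w.1, (hp w.1).mpr w.2.1, ?_⟩,
    fun w => ⟨ψ.symm w.1, (hps w.1).mpr w.2.1, ?_⟩, ?_, ?_⟩⟩
  · rcases w.2.2 with h | h
    · exact Or.inl (congrArg ψ h)
    · exact Or.inr (ψ.map_adj_iff.mpr h)
  · rcases w.2.2 with h | h
    · left
      rw [h, RelIso.symm_apply_apply]
    · right
      have h2 : G.Adj (ψ.symm (ψ x)) (ψ.symm w.1) := (ψ.symm : G ≃g G).map_adj_iff.mpr h
      rwa [RelIso.symm_apply_apply] at h2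
  · intro w
    exact Subtype.ext (ψ.symm_apply_apply w.1)
  · intro w
    exact Subtype.ext (ψ.apply_symm_apply w.1)

lemma blowup_contra [Nonempty V] (hUH : Ultrahomogeneous G red) (hcnt : Countable V)
    (col : V → Prop) (hcol : (∀ v, col v ↔ red v) ∨ (∀ v, col v ↔ ¬ red v))
    (hUC : IsUnionOfCliques G {v | col v})
    (c0 d0 : V) (hc0 : col c0) (hd0 : col d0) (hne : c0 ≠ d0) (hadj0 : G.Adj c0 d0)
    (hnbhd : ∀ u v, col u → col v → G.Adj u v → ∀ x, ¬ col x → (G.Adj x u ↔ G.Adj x v)) :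
    IsBlowUpOf G col := by
  haveI := hcnt
  apply blowup_of_uniform col hUC (↥(grp G col c0)) ?_ ?_ ?_ hnbhd
  · exact Cardinal.two_le_iff.mpr ⟨⟨c0, mem_grp_self hc0⟩, ⟨d0, ⟨hd0, Or.inr hadj0⟩⟩,
      fun h => hne (congrArg Subtype.val h)⟩
  · exact Cardinal.mk_le_aleph0
  · intro v hv
    have hcc : red c0 ↔ red v := by
      rcases hcol with h | h
      · exact ((h c0).symm.trans (iff_of_true hc0 hv)).trans (h v)
      · exact iff_of_false ((h c0).mp hc0) ((h v).mp hv)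
    obtain ⟨ψ, hpres, hψ⟩ := t1 hUH hcc
    have hpcol : ∀ w, col (ψ w) ↔ col w := by
      intro w
      rcases hcol with h | h
      · rw [h (ψ w), h w]; exact hpres w
      · rw [h (ψ w), h w]; exact not_congr (hpres w)
    have hne := grp_equiv_nonempty ψ hpcol c0
    rwa [hψ] at hne

section Core

variable {Cross : V → V → Prop}

lemma core [Nonempty V]
    (hUH : Ultrahomogeneous G red)
    (rUC : IsUnionOfCliques G {v | red v})
    (bUC : IsUnionOfCliques G {v | ¬ red v})
    (hC : (∀ a b, Cross a b ↔ G.Adj a b) ∨ (∀ a b, Cross a b ↔ ¬ G.Adj a b))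
    (hcnt : Countable V)
    {ra rb : V} (hra : red ra) (hrb : red rb) (hrne : ra ≠ rb) (hrnadj : ¬ G.Adj ra rb)
    {ba bb : V} (hba : ¬ red ba) (hbb : ¬ red bb) (hbne : ba ≠ bb)
    (h1 : ∀ x, red x → ∃ v w, red v ∧ red w ∧ v ≠ w ∧ G.Adj x v ∧ G.Adj x w)
    (h2 : ∀ x c y z, red x → ¬ red c → y ∈ grp G red x → z ∈ grp G red x →
      Cross c y → Cross c z → y = z)
    (h3 : ∀ x c, red x → ¬ red c → ∃ y, y ∈ grp G red x ∧ Cross c y)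
    (h4 : ∀ x, red x → ∃ c, ¬ red c ∧ Cross c x)
    (hBU : ¬ IsBlowUpOf G (fun v => ¬ red v)) : False := by
  classical
  -- Cross transport helpers
  have cmap : ∀ (ψ : G ≃g G) (a b : V), Cross a b → Cross (ψ a) (ψ b) := by
    intro ψ a b h
    rcases hC with hCl | hCl
    · exact (hCl _ _).mpr (ψ.map_adj_iff.mpr ((hCl a b).mp h))
    · exact (hCl _ _).mpr (fun hadj => (hCl a b).mp h (ψ.map_adj_iff.mp hadj))
  have cmapn : ∀ (ψ : G ≃g G) (a b : V), ¬ Cross a b → ¬ Cross (ψ a) (ψ b) := by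
    intro ψ a b h hcc
    rcases hC with hCl | hCl
    · exact h ((hCl a b).mpr (ψ.map_adj_iff.mp ((hCl _ _).mp hcc)))
    · exact h ((hCl a b).mpr (fun hadj => (hCl _ _).mp hcc (ψ.map_adj_iff.mpr hadj)))
  have crossAdjN : ∀ {c y c' y' : V}, ¬ Cross c y → ¬ Cross c' y' →
      (G.Adj y c ↔ G.Adj y' c') := by
    intro c y c' y' h h'
    rw [G.adj_comm y c, G.adj_comm y' c']
    rcases hC with hCl | hCl
    · exact iff_of_false (fun ha => h ((hCl c y).mpr ha)) (fun ha => h' ((hCl c' y').mpr ha))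
    · exact iff_of_true (not_not.mp (fun ha => h ((hCl c y).mpr ha)))
        (not_not.mp (fun ha => h' ((hCl c' y').mpr ha)))
  -- equal cross-neighbourhood relation on non-red vertices
  let Same : V → V → Prop := fun c d => ∀ y, red y → (Cross c y ↔ Cross d y)
  have same_symm : ∀ c d, Same c d → Same d c := fun c d h y hy => (h y hy).symm
  have same_trans : ∀ c d e, Same c d → Same d e → Same c e :=
    fun _ _ _ h h' y hy => (h y hy).trans (h' y hy)
  have hmem_adj : ∀ {x y q : V}, red x → y ∈ grp G red x → G.Adj y q → red q →
      q ∈ grp G red x := by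
    intro x y q hx hy hadj hq
    rw [← grp_eq_of_mem rUC hx hy]
    exact ⟨hq, Or.inr hadj⟩
  -- the separation lemma
  have lemsep : ∀ p c d, red p → ¬ red c → ¬ red d → c ≠ d → Cross c p → Cross d p →
      ∀ y z, red y → z ∈ grp G red y → y ≠ z → Cross c y → Cross d z → False := by
    intro p c d hp hc hd hcd hCc hCd y z hy hzm hyz hCcy hCdz
    obtain ⟨a1, a2, ha1, ha2, ha12, hya1, hya2⟩ := h1 y hy
    have ha1m : a1 ∈ grp G red y := ⟨ha1, Or.inr hya1⟩
    have ha2m : a2 ∈ grp G red y := ⟨ha2, Or.inr hya2⟩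
    obtain ⟨x2, hx2m, hx2y, hx2z⟩ : ∃ x2, x2 ∈ grp G red y ∧ x2 ≠ y ∧ x2 ≠ z := by
      by_cases h : a1 = z
      · exact ⟨a2, ha2m, (G.ne_of_adj hya2).symm, fun he => ha12 (h.trans he.symm)⟩
      · exact ⟨a1, ha1m, (G.ne_of_adj hya1).symm, h⟩
    have hx2red : red x2 := hx2m.1
    have hnx2c : ¬ Cross c x2 :=
      fun hcc => hx2y (h2 y c x2 y hy hc hx2m (mem_grp_self hy) hcc hCcy)
    have hnx2d : ¬ Cross d x2 :=
      fun hcc => hx2z (h2 y d x2 z hy hd hx2m hzm hcc hCdz)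
    obtain ⟨b1, b2, hb1, hb2, hb12, hpb1, hpb2⟩ := h1 p hp
    have hb1m : b1 ∈ grp G red p := ⟨hb1, Or.inr hpb1⟩
    have hnx1c : ¬ Cross c b1 := fun hcc =>
      (G.ne_of_adj hpb1) (h2 p c p b1 hp hc (mem_grp_self hp) hb1m hCc hcc)
    have hnx1d : ¬ Cross d b1 := fun hcc =>
      (G.ne_of_adj hpb1) (h2 p d p b1 hp hd (mem_grp_self hp) hb1m hCd hcc)
    obtain ⟨ψ, hpres, hψ1, hψ2, hψ3⟩ := t3 hUH
      (ne_of_col hb1 hc) (ne_of_col hb1 hd) hcd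
      (ne_of_col hx2red hc) (ne_of_col hx2red hd) hcd
      (iff_of_true hb1 hx2red) Iff.rfl Iff.rfl
      (crossAdjN hnx1c hnx2c) (crossAdjN hnx1d hnx2d) Iff.rfl
    have hq : red (ψ p) := (hpres p).mpr hp
    have hqadj : G.Adj x2 (ψ p) := by
      have h5 : G.Adj (ψ p) (ψ b1) := ψ.map_adj_iff.mpr hpb1
      rw [hψ1] at h5
      exact h5.symm
    have hqm : ψ p ∈ grp G red y := hmem_adj hy hx2m hqadj hq
    have hCcq : Cross c (ψ p) := by
      have h5 := cmap ψ c p hCc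
      rwa [hψ2] at h5
    have hCdq : Cross d (ψ p) := by
      have h5 := cmap ψ d p hCd
      rwa [hψ3] at h5
    have he1 : ψ p = y := h2 y c (ψ p) y hy hc hqm (mem_grp_self hy) hCcq hCcy
    have he2 : ψ p = z := h2 y d (ψ p) z hy hd hqm hzm hCdq hCdz
    exact hyz (he1.symm.trans he2)
  -- common cross-neighbour implies equal cross-neighbourhoods
  have cl1 : ∀ x c d, red x → ¬ red c → ¬ red d → c ≠ d → Cross c x → Cross d x →
      Same c d := by
    intro x c d hx hc hd hcd hCc hCd y hy
    by_contra hiff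
    have hcases : (Cross c y ∧ ¬ Cross d y) ∨ (Cross d y ∧ ¬ Cross c y) := by tauto
    rcases hcases with ⟨h5, h6⟩ | ⟨h5, h6⟩
    · obtain ⟨z, hzm, hz⟩ := h3 y d hy hd
      have hzy : y ≠ z := fun he => h6 (by rw [he]; exact hz)
      exact lemsep x c d hx hc hd hcd hCc hCd y z hy hzm hzy h5 hz
    · obtain ⟨z, hzm, hz⟩ := h3 y c hy hc
      have hzy : y ≠ z := fun he => h6 (by rw [he]; exact hz)
      exact lemsep x d c hx hd hc (Ne.symm hcd) hCd hCc y z hy hzm hzy h5 hz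
  -- the "alpha" configuration is impossible
  have lemalpha : ∀ e e', ¬ red e → ¬ red e' → e ≠ e' → Same e e' → ¬ G.Adj e e' →
      False := by
    intro e e' he he' hee hsame hnadj
    obtain ⟨p0, hp0m, hCp0⟩ := h3 ra e hra he
    have hp0 : red p0 := hp0m.1
    have hCp0' : Cross e' p0 := (hsame p0 hp0).mp hCp0
    obtain ⟨m1, m2, hm1, hm2, hm12, hpm1, hpm2⟩ := h1 p0 hp0
    have hm1m : m1 ∈ grp G red p0 := ⟨hm1, Or.inr hpm1⟩
    have hnem1 : ¬ Cross e m1 := fun hcc => (G.ne_of_adj hpm1)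
      (h2 p0 e p0 m1 hp0 he (mem_grp_self hp0) hm1m hCp0 hcc)
    obtain ⟨c1, hc1, hCc1⟩ := h4 m1 hm1
    have hc1e : c1 ≠ e := fun hh => hnem1 (by rw [← hh]; exact hCc1)
    have hnsame : ¬ Same c1 e := by
      intro hs
      have hCc1p0 : Cross c1 p0 := (hs p0 hp0).mpr hCp0
      exact (G.ne_of_adj hpm1)
        (h2 p0 c1 p0 m1 hp0 hc1 (mem_grp_self hp0) hm1m hCc1p0 hCc1)
    have hnsame' : ¬ Same c1 e' := fun hs =>
      hnsame (same_trans _ _ _ hs (same_symm _ _ hsame))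
    have hc1e' : c1 ≠ e' := by
      intro hh
      apply hnsame'
      rw [hh]
      exact fun y hy => Iff.rfl
    by_cases hA1 : G.Adj e c1
    · by_cases hA2 : G.Adj e' c1
      · exact hnadj (bUC e he c1 hc1 e' he' hA1 hA2.symm hee)
      · obtain ⟨ψ, hpres, hψ1, hψ2⟩ := t2 hUH (Ne.symm hee) (Ne.symm hc1e')
          Iff.rfl (iff_of_false he hc1)
          (iff_of_false (fun h => hnadj h.symm) hA2)
        have hq : red (ψ p0) := (hpres p0).mpr hp0
        have hCq1 : Cross e' (ψ p0) := by
          have h5 := cmap ψ e' p0 hCp0'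
          rwa [hψ1] at h5
        have hCq2 : Cross c1 (ψ p0) := by
          have h5 := cmap ψ e p0 hCp0
          rwa [hψ2] at h5
        exact hnsame' (same_symm _ _
          (cl1 (ψ p0) e' c1 hq he' hc1 (Ne.symm hc1e') hCq1 hCq2))
    · obtain ⟨ψ, hpres, hψ1, hψ2⟩ := t2 hUH hee (Ne.symm hc1e)
        Iff.rfl (iff_of_false he' hc1)
        (iff_of_false hnadj hA1)
      have hq : red (ψ p0) := (hpres p0).mpr hp0
      have hCq1 : Cross e (ψ p0) := by
        have h5 := cmap ψ e p0 hCp0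
        rwa [hψ1] at h5
      have hCq2 : Cross c1 (ψ p0) := by
        have h5 := cmap ψ e' p0 hCp0'
        rwa [hψ2] at h5
      exact hnsame (same_symm _ _
        (cl1 (ψ p0) e c1 hq he hc1 (Ne.symm hc1e) hCq1 hCq2))
  -- main case split
  by_cases hCI : ∃ p c d, red p ∧ ¬ red c ∧ ¬ red d ∧ c ≠ d ∧ Cross c p ∧ Cross d p
  · obtain ⟨p, c, d, hp, hc, hd, hcd, hCc, hCd⟩ := hCI
    have hsame_cd : Same c d := cl1 p c d hp hc hd hcd hCc hCd
    by_cases hAcd : G.Adj c d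
    · -- every blue edge joins vertices with the same cross-neighbourhood
      have hb1 : ∀ e e', ¬ red e → ¬ red e' → G.Adj e e' → Same e e' := by
        intro e e' he he' hadj y hy
        by_contra hiff
        have hcases : (Cross e y ∧ ¬ Cross e' y) ∨ (Cross e' y ∧ ¬ Cross e y) := by tauto
        obtain ⟨ψ, hpres, hψ1, hψ2⟩ := t2 hUH hadj.ne hcd
          (iff_of_false he hc) (iff_of_false he' hd) (iff_of_true hadj hAcd)
        have hψy : red (ψ y) := (hpres y).mpr hy
        rcases hcases with ⟨hy1, hy2⟩ | ⟨hy1, hy2⟩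
        · have h5 : Cross c (ψ y) := by
            have h6 := cmap ψ e y hy1
            rwa [hψ1] at h6
          have h6 : ¬ Cross d (ψ y) := by
            have h7 := cmapn ψ e' y hy2
            rwa [hψ2] at h7
          exact h6 ((hsame_cd (ψ y) hψy).mp h5)
        · have h5 : Cross d (ψ y) := by
            have h6 := cmap ψ e' y hy1
            rwa [hψ2] at h6
          have h6 : ¬ Cross c (ψ y) := by
            have h7 := cmapn ψ e y hy2
            rwa [hψ1] at h7
          exact h6 ((hsame_cd (ψ y) hψy).mpr h5)
      apply hBU
      apply blowup_contra hUH hcnt (fun v => ¬ red v) (Or.inr (fun v => Iff.rfl)) bUC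
        c d hc hd hcd hAcd
      intro u v hu hv hadj x hx
      have hx' : red x := not_not.mp hx
      have h5 := hb1 u v hu hv hadj x hx'
      rcases hC with hCl | hCl
      · rw [G.adj_comm x u, G.adj_comm x v, ← hCl u x, ← hCl v x]
        exact h5
      · rw [hCl u x, hCl v x] at h5
        rw [G.adj_comm x u, G.adj_comm x v]
        exact not_iff_not.mp h5
    · exact lemalpha c d hc hd hcd hsame_cd hAcd
  · -- no red vertex has two distinct cross-neighbours
    have hCI' : ∀ p c d, red p → ¬ red c → ¬ red d → Cross c p → Cross d p → c = d := by
      intro p c d hp hc hd hCc hCd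
      by_contra hne
      exact hCI ⟨p, c, d, hp, hc, hd, hne, hCc, hCd⟩
    obtain ⟨c, hc, hCc⟩ := h4 ra hra
    have hrbgrp : ∀ w, w ∈ grp G red rb → ¬ G.Adj ra w ∧ ra ≠ w := by
      intro w hw
      have hmem : G.Adj ra w ∨ ra = w → ra ∈ grp G red rb := by
        intro h
        rcases h with h | h
        · exact hmem_adj hrb hw h.symm hra
        · rw [h]; exact hw
      constructor
      · intro hadj
        rcases (hmem (Or.inl hadj)).2 with h | h
        · exact hrne h
        · exact hrnadj h.symm
      · intro he
        rcases (hmem (Or.inr he)).2 with h | h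
        · exact hrne h
        · exact hrnadj h.symm
    obtain ⟨p', hp'm, hCcp'⟩ := h3 rb c hrb hc
    obtain ⟨d, hd, hdc⟩ : ∃ d, ¬ red d ∧ d ≠ c := by
      by_cases h : ba = c
      · exact ⟨bb, hbb, fun he => hbne ((he.trans h.symm).symm)⟩
      · exact ⟨ba, hba, h⟩
    obtain ⟨q', hq'm, hCdq'⟩ := h3 rb d hrb hd
    have hp'q' : p' ≠ q' := by
      intro he
      exact hdc (hCI' p' c d hp'm.1 hc hd hCcp' (by rw [he]; exact hCdq')).symm
    obtain ⟨hnra_p', hra_ne_p'⟩ := hrbgrp p' hp'm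
    obtain ⟨hnra_q', hra_ne_q'⟩ := hrbgrp q' hq'm
    obtain ⟨ψ, hpres, hψ1, hψ2⟩ := t2 hUH hra_ne_p' hra_ne_q'
      Iff.rfl (iff_of_true hp'm.1 hq'm.1) (iff_of_false hnra_p' hnra_q')
    have hψc_blue : ¬ red (ψ c) := fun h => hc ((hpres c).mp h)
    have hCψc : Cross (ψ c) ra := by
      have h5 := cmap ψ c ra hCc
      rwa [hψ1] at h5
    have hψc_eq : ψ c = c := hCI' ra (ψ c) c hra hψc_blue hc hCψc hCc
    have hCcq' : Cross c q' := by
      have h5 := cmap ψ c p' hCcp'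
      rwa [hψc_eq, hψ2] at h5
    exact hdc (hCI' q' c d hq'm.1 hc hd hCcq' hCdq').symm

end Core
section Main

variable [Nonempty V]

/-- Under `ω_R = 2` (unique red partners) and uniform cross-neighbourhoods on red pairs,
`G` is a blow-up of its red class. -/
lemma step2a (hUH : Ultrahomogeneous G red) (rUC : IsUnionOfCliques G {v | red v})
    (hcnt : Countable V) {r0 : V} (hr0 : red r0)
    (hR' : ∀ u, red u → ∃ v, (red v ∧ G.Adj u v) ∧ ∀ w, red w → G.Adj u w → w = v)
    (hAll : ∀ x y, red x → red y → G.Adj x y → ∀ c, ¬ red c → (G.Adj c x ↔ G.Adj c y))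
    (hBU : ¬ IsBlowUpOf G red) : False := by
  apply hBU
  obtain ⟨p0, ⟨hp0r, hp0a⟩, -⟩ := hR' r0 hr0
  apply blowup_contra hUH hcnt red (Or.inl fun v => Iff.rfl) rUC r0 p0 hr0 hp0r
    (G.ne_of_adj hp0a) hp0a
  intro u v hu hv hadj x hx
  exact hAll u v hu hv hadj x hx

lemma step2_omitted (hUH : Ultrahomogeneous G red) (rUC : IsUnionOfCliques G {v | red v})
    (hcnt : Countable V) {r0 : V} (hr0 : red r0)
    (hR' : ∀ u, red u → ∃ v, (red v ∧ G.Adj u v) ∧ ∀ w, red w → G.Adj u w → w = v)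
    (hBU : ¬ IsBlowUpOf G red) :
    (¬ Realizes G red Tr TrRed) ∧ (¬ Realizes G red TrTilde TrRed) ∧
    (∃ x c, red x ∧ ¬ red c ∧ G.Adj x c) ∧ (∃ x c, red x ∧ ¬ red c ∧ ¬ G.Adj x c) := by
  refine ⟨?_, ?_, ?_, ?_⟩
  · -- Tr omitted
    intro hreal
    obtain ⟨u, v, b, hu, hv, hb, huv, hub, hvb⟩ := Tr_extract hreal
    have hdir : ∀ x y c, red x → red y → G.Adj x y → ¬ red c → G.Adj c x → G.Adj c y := by
      intro x y c hx hy hxy hc hcx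
      obtain ⟨ψ, hpres, hψ1, hψ2⟩ := t2 hUH (ne_of_col hu hb) (ne_of_col hx hc)
        (iff_of_true hu hx) (iff_of_false hb hc) (iff_of_true hub hcx.symm)
      have hψv : red (ψ v) := (hpres v).mpr hv
      have hψvadj : G.Adj x (ψ v) := by
        have h5 : G.Adj (ψ u) (ψ v) := ψ.map_adj_iff.mpr huv
        rwa [hψ1] at h5
      obtain ⟨px, hpx, huniq⟩ := hR' x hx
      have he1 : ψ v = px := huniq (ψ v) hψv hψvadj
      have he2 : y = px := huniq y hy hxy
      have h5 : G.Adj (ψ v) (ψ b) := ψ.map_adj_iff.mpr hvb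
      rw [hψ2, he1, ← he2] at h5
      exact h5.symm
    apply step2a hUH rUC hcnt hr0 hR' ?_ hBU
    intro x y hx hy hxy c hc
    exact ⟨fun h => hdir x y c hx hy hxy hc h, fun h => hdir y x c hy hx hxy.symm hc h⟩
  · -- TrTilde omitted
    intro hreal
    obtain ⟨u, v, b, hu, hv, hb, huv, hub, hvb⟩ := TrTilde_extract hreal
    have hdir : ∀ x y c, red x → red y → G.Adj x y → ¬ red c → ¬ G.Adj c x → ¬ G.Adj c y := by
      intro x y c hx hy hxy hc hcx
      obtain ⟨ψ, hpres, hψ1, hψ2⟩ := t2 hUH (ne_of_col hu hb) (ne_of_col hx hc)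
        (iff_of_true hu hx) (iff_of_false hb hc)
        (iff_of_false hub (fun h => hcx h.symm))
      have hψv : red (ψ v) := (hpres v).mpr hv
      have hψvadj : G.Adj x (ψ v) := by
        have h5 : G.Adj (ψ u) (ψ v) := ψ.map_adj_iff.mpr huv
        rwa [hψ1] at h5
      obtain ⟨px, hpx, huniq⟩ := hR' x hx
      have he1 : ψ v = px := huniq (ψ v) hψv hψvadj
      have he2 : y = px := huniq y hy hxy
      intro hcy
      have h5 : G.Adj (ψ v) (ψ b) := by
        rw [hψ2, he1, ← he2]
        exact hcy.symm
      rw [ψ.map_adj_iff] at h5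
      exact hvb h5
    apply step2a hUH rUC hcnt hr0 hR' ?_ hBU
    intro x y hx hy hxy c hc
    exact not_iff_not.mp
      ⟨fun h => hdir x y c hx hy hxy hc h, fun h => hdir y x c hy hx hxy.symm hc h⟩
  · -- a red-blue edge exists
    by_contra hcon
    push_neg at hcon
    apply step2a hUH rUC hcnt hr0 hR' ?_ hBU
    intro x y hx hy hxy c hc
    exact iff_of_false (fun h => hcon x c hx hc h.symm) (fun h => hcon y c hy hc h.symm)
  · -- a red-blue non-edge exists
    by_contra hcon
    push_neg at hcon
    apply step2a hUH rUC hcnt hr0 hR' ?_ hBU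
    intro x y hx hy hxy c hc
    exact iff_of_true (hcon x c hx hc).symm (hcon y c hy hc).symm

lemma R'_to_min (hUH : Ultrahomogeneous G red) (rUC : IsUnionOfCliques G {v | red v})
    (hcnt : Countable V) {r0 : V} (hr0 : red r0)
    (hR' : ∀ u, red u → ∃ v, (red v ∧ G.Adj u v) ∧ ∀ w, red w → G.Adj u w → w = v)
    (hBU : ¬ IsBlowUpOf G red) :
    MinOmitted G red Tr TrRed ∧ MinOmitted G red TrTilde TrRed := by
  obtain ⟨hTrOm, hTTOm, ⟨xa, ca, hxa, hca, haa⟩, ⟨xn, cn, hxn, hcn, hnn⟩⟩ :=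
    step2_omitted hUH rUC hcnt hr0 hR' hBU
  obtain ⟨p0, ⟨hp0r, hp0a⟩, -⟩ := hR' r0 hr0
  constructor
  · refine ⟨hTrOm, minOmitted_realize ?_ ?_ ?_⟩
    · exact realizes_pair (by decide) (G.ne_of_adj hp0a)
        (iff_of_true hr0 (by exact Or.inl rfl)) (iff_of_true hp0r (by exact Or.inr rfl))
        (iff_of_true hp0a (by simp [Tr]))
    · exact realizes_pair (by decide) (ne_of_col hxa hca)
        (iff_of_true hxa (by exact Or.inl rfl)) (iff_of_false hca (by simp [TrRed]))
        (iff_of_true haa (by simp [Tr]))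
    · exact realizes_pair (by decide) (ne_of_col hxa hca)
        (iff_of_true hxa (by exact Or.inr rfl)) (iff_of_false hca (by simp [TrRed]))
        (iff_of_true haa (by simp [Tr]))
  · refine ⟨hTTOm, minOmitted_realize ?_ ?_ ?_⟩
    · exact realizes_pair (by decide) (G.ne_of_adj hp0a)
        (iff_of_true hr0 (by exact Or.inl rfl)) (iff_of_true hp0r (by exact Or.inr rfl))
        (iff_of_true hp0a (by simp [TrTilde, SimpleGraph.fromRel_adj]))
    · exact realizes_pair (by decide) (ne_of_col hxn hcn)
        (iff_of_true hxn (by exact Or.inl rfl)) (iff_of_false hcn (by simp [TrRed]))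
        (iff_of_false hnn (by simp [TrTilde, SimpleGraph.fromRel_adj]))
    · exact realizes_pair (by decide) (ne_of_col hxn hcn)
        (iff_of_true hxn (by exact Or.inr rfl)) (iff_of_false hcn (by simp [TrRed]))
        (iff_of_false hnn (by simp [TrTilde, SimpleGraph.fromRel_adj]))

lemma pair_ne_univ (a b : Fin 3) (c : Fin 3) (hc : c ∉ ({a, b} : Set (Fin 3))) :
    ({a, b} : Set (Fin 3)) ≠ Set.univ := by
  intro h
  exact hc (h ▸ Set.mem_univ c)

lemma minTr_to_R' (hUH : Ultrahomogeneous G red)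
    (rUC : IsUnionOfCliques G {v | red v}) (bUC : IsUnionOfCliques G {v | ¬ red v})
    (hcnt : Countable V)
    {ra rb : V} (hra : red ra) (hrb : red rb) (hrne : ra ≠ rb) (hrnadj : ¬ G.Adj ra rb)
    {ba bb : V} (hba : ¬ red ba) (hbb : ¬ red bb) (hbne : ba ≠ bb)
    (hBUb : ¬ IsBlowUpOf G (fun v => ¬ red v))
    (hmin : MinOmitted G red Tr TrRed) :
    ∀ u, red u → ∃ v, (red v ∧ G.Adj u v) ∧ ∀ w, red w → G.Adj u w → w = v := by
  have hOm := hmin.1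
  obtain ⟨u0, v0, hne01, hcu0, hcv0, hadj01'⟩ := realizes_pair_extract (0 : Fin 3) 1
    (by decide) (hmin.2 {0, 1} (pair_ne_univ 0 1 2 (by simp)))
  have hu0red : red u0 := hcu0.mpr (Or.inl rfl)
  have hv0red : red v0 := hcv0.mpr (Or.inr rfl)
  have hadj01 : G.Adj u0 v0 := hadj01'.mpr (by simp [Tr])
  obtain ⟨x0, c0, hne02, hcx0, hcc0, hadj02'⟩ := realizes_pair_extract (0 : Fin 3) 2
    (by decide) (hmin.2 {0, 2} (pair_ne_univ 0 2 1 (by simp)))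
  have hx0red : red x0 := hcx0.mpr (Or.inl rfl)
  have hc0blue : ¬ red c0 := fun h => by simpa [TrRed] using hcc0.mp h
  have hadj0 : G.Adj x0 c0 := hadj02'.mpr (by simp [Tr])
  have h3a : ∀ x, red x → ∃ v, red v ∧ G.Adj x v := by
    intro x hx
    obtain ⟨ψ, hpres, hψ⟩ := t1 hUH (iff_of_true hu0red hx)
    refine ⟨ψ v0, (hpres v0).mpr hv0red, ?_⟩
    have h5 : G.Adj (ψ u0) (ψ v0) := ψ.map_adj_iff.mpr hadj01
    rwa [hψ] at h5
  have hTrc : ∀ y z c, red y → red z → ¬ red c → G.Adj y z → G.Adj c y → ¬ G.Adj c z := by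
    intro y z c hy hz hc hyz h5 h6
    exact hOm (realizes_Tr hy hz hc hyz h5.symm h6.symm)
  have h2' : ∀ x c y z, red x → ¬ red c → y ∈ grp G red x → z ∈ grp G red x →
      G.Adj c y → G.Adj c z → y = z := by
    intro x c y z hx hc hy hz hcy hcz
    by_contra hne
    exact hTrc y z c hy.1 hz.1 hc (adj_of_mem_grp rUC hx hy hz hne) hcy hcz
  obtain ⟨x1, hx1red, hx1adj⟩ := h3a x0 hx0red
  have hnx1c0 : ¬ G.Adj c0 x1 := hTrc x0 x1 c0 hx0red hx1red hc0blue hx1adj hadj0.symm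
  have h3' : ∀ x c, red x → ¬ red c → ∃ y, y ∈ grp G red x ∧ G.Adj c y := by
    intro x c hx hc
    by_cases hcx : G.Adj c x
    · exact ⟨x, mem_grp_self hx, hcx⟩
    · obtain ⟨ψ, hpres, hψ1, hψ2⟩ := t2 hUH (ne_of_col hx1red hc0blue) (ne_of_col hx hc)
        (iff_of_true hx1red hx) (iff_of_false hc0blue hc)
        (iff_of_false (fun h => hnx1c0 h.symm) (fun h => hcx h.symm))
      refine ⟨ψ x0, ⟨(hpres x0).mpr hx0red, Or.inr ?_⟩, ?_⟩
      · have h5 : G.Adj (ψ x1) (ψ x0) := ψ.map_adj_iff.mpr hx1adj.symm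
        rwa [hψ1] at h5
      · have h5 : G.Adj (ψ c0) (ψ x0) := ψ.map_adj_iff.mpr hadj0.symm
        rwa [hψ2] at h5
  have h4' : ∀ x, red x → ∃ c, ¬ red c ∧ G.Adj c x := by
    intro x hx
    obtain ⟨ψ, hpres, hψ⟩ := t1 hUH (iff_of_true hx0red hx)
    refine ⟨ψ c0, fun h => hc0blue ((hpres c0).mp h), ?_⟩
    have h5 : G.Adj (ψ c0) (ψ x0) := ψ.map_adj_iff.mpr hadj0.symm
    rwa [hψ] at h5
  intro u hu
  obtain ⟨v, hvred, hvadj⟩ := h3a u hu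
  refine ⟨v, ⟨hvred, hvadj⟩, ?_⟩
  intro w hw hadjw
  by_contra hne
  have h1' : ∀ x, red x → ∃ a b, red a ∧ red b ∧ a ≠ b ∧ G.Adj x a ∧ G.Adj x b := by
    intro x hx
    obtain ⟨ψ, hpres, hψ⟩ := t1 hUH (iff_of_true hu hx)
    refine ⟨ψ v, ψ w, (hpres v).mpr hvred, (hpres w).mpr hw,
      fun he => hne (ψ.injective he).symm, ?_, ?_⟩
    · have h5 : G.Adj (ψ u) (ψ v) := ψ.map_adj_iff.mpr hvadj
      rwa [hψ] at h5
    · have h5 : G.Adj (ψ u) (ψ w) := ψ.map_adj_iff.mpr hadjw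
      rwa [hψ] at h5
  exact core (Cross := fun a b => G.Adj a b) hUH rUC bUC (Or.inl (fun a b => Iff.rfl)) hcnt
    hra hrb hrne hrnadj hba hbb hbne h1' h2' h3' h4' hBUb

lemma minTrTilde_to_R' (hUH : Ultrahomogeneous G red)
    (rUC : IsUnionOfCliques G {v | red v}) (bUC : IsUnionOfCliques G {v | ¬ red v})
    (hcnt : Countable V)
    {ra rb : V} (hra : red ra) (hrb : red rb) (hrne : ra ≠ rb) (hrnadj : ¬ G.Adj ra rb)
    {ba bb : V} (hba : ¬ red ba) (hbb : ¬ red bb) (hbne : ba ≠ bb)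
    (hBUb : ¬ IsBlowUpOf G (fun v => ¬ red v))
    (hmin : MinOmitted G red TrTilde TrRed) :
    ∀ u, red u → ∃ v, (red v ∧ G.Adj u v) ∧ ∀ w, red w → G.Adj u w → w = v := by
  have hOm := hmin.1
  obtain ⟨u0, v0, hne01, hcu0, hcv0, hadj01'⟩ := realizes_pair_extract (0 : Fin 3) 1
    (by decide) (hmin.2 {0, 1} (pair_ne_univ 0 1 2 (by simp)))
  have hu0red : red u0 := hcu0.mpr (Or.inl rfl)
  have hv0red : red v0 := hcv0.mpr (Or.inr rfl)
  have hadj01 : G.Adj u0 v0 := hadj01'.mpr (by simp [TrTilde, SimpleGraph.fromRel_adj])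
  obtain ⟨x0, c0, hne02, hcx0, hcc0, hadj02'⟩ := realizes_pair_extract (0 : Fin 3) 2
    (by decide) (hmin.2 {0, 2} (pair_ne_univ 0 2 1 (by simp)))
  have hx0red : red x0 := hcx0.mpr (Or.inl rfl)
  have hc0blue : ¬ red c0 := fun h => by simpa [TrRed] using hcc0.mp h
  have hnadj0 : ¬ G.Adj x0 c0 := fun h => by
    simpa [TrTilde, SimpleGraph.fromRel_adj] using hadj02'.mp h
  have h3a : ∀ x, red x → ∃ v, red v ∧ G.Adj x v := by
    intro x hx
    obtain ⟨ψ, hpres, hψ⟩ := t1 hUH (iff_of_true hu0red hx)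
    refine ⟨ψ v0, (hpres v0).mpr hv0red, ?_⟩
    have h5 : G.Adj (ψ u0) (ψ v0) := ψ.map_adj_iff.mpr hadj01
    rwa [hψ] at h5
  have hTTc : ∀ y z c, red y → red z → ¬ red c → G.Adj y z → ¬ G.Adj c y → G.Adj c z := by
    intro y z c hy hz hc hyz h5
    by_contra h6
    exact hOm (realizes_TrTilde hy hz hc hyz (fun h => h5 h.symm) (fun h => h6 h.symm))
  have h2' : ∀ x c y z, red x → ¬ red c → y ∈ grp G red x → z ∈ grp G red x →
      ¬ G.Adj c y → ¬ G.Adj c z → y = z := by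
    intro x c y z hx hc hy hz hcy hcz
    by_contra hne
    exact hcz (hTTc y z c hy.1 hz.1 hc (adj_of_mem_grp rUC hx hy hz hne) hcy)
  obtain ⟨x1, hx1red, hx1adj⟩ := h3a x0 hx0red
  have hadjc0x1 : G.Adj c0 x1 :=
    hTTc x0 x1 c0 hx0red hx1red hc0blue hx1adj (fun h => hnadj0 h.symm)
  have h3' : ∀ x c, red x → ¬ red c → ∃ y, y ∈ grp G red x ∧ ¬ G.Adj c y := by
    intro x c hx hc
    by_cases hcx : G.Adj c x
    · obtain ⟨ψ, hpres, hψ1, hψ2⟩ := t2 hUH (ne_of_col hx1red hc0blue) (ne_of_col hx hc)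
        (iff_of_true hx1red hx) (iff_of_false hc0blue hc)
        (iff_of_true hadjc0x1.symm hcx.symm)
      refine ⟨ψ x0, ⟨(hpres x0).mpr hx0red, Or.inr ?_⟩, ?_⟩
      · have h5 : G.Adj (ψ x1) (ψ x0) := ψ.map_adj_iff.mpr hx1adj.symm
        rwa [hψ1] at h5
      · intro h5
        rw [← hψ2] at h5
        have h6 : G.Adj (ψ c0) (ψ x0) := h5
        rw [ψ.map_adj_iff] at h6
        exact hnadj0 h6.symm
    · exact ⟨x, mem_grp_self hx, hcx⟩
  have h4' : ∀ x, red x → ∃ c, ¬ red c ∧ ¬ G.Adj c x := by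
    intro x hx
    obtain ⟨ψ, hpres, hψ⟩ := t1 hUH (iff_of_true hx0red hx)
    refine ⟨ψ c0, fun h => hc0blue ((hpres c0).mp h), ?_⟩
    intro h5
    rw [← hψ] at h5
    have h6 : G.Adj (ψ c0) (ψ x0) := h5
    rw [ψ.map_adj_iff] at h6
    exact hnadj0 h6.symm
  intro u hu
  obtain ⟨v, hvred, hvadj⟩ := h3a u hu
  refine ⟨v, ⟨hvred, hvadj⟩, ?_⟩
  intro w hw hadjw
  by_contra hne
  have h1' : ∀ x, red x → ∃ a b, red a ∧ red b ∧ a ≠ b ∧ G.Adj x a ∧ G.Adj x b := by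
    intro x hx
    obtain ⟨ψ, hpres, hψ⟩ := t1 hUH (iff_of_true hu hx)
    refine ⟨ψ v, ψ w, (hpres v).mpr hvred, (hpres w).mpr hw,
      fun he => hne (ψ.injective he).symm, ?_, ?_⟩
    · have h5 : G.Adj (ψ u) (ψ v) := ψ.map_adj_iff.mpr hvadj
      rwa [hψ] at h5
    · have h5 : G.Adj (ψ u) (ψ w) := ψ.map_adj_iff.mpr hadjw
      rwa [hψ] at h5
  exact core (Cross := fun a b => ¬ G.Adj a b) hUH rUC bUC (Or.inr (fun a b => Iff.rfl)) hcnt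
    hra hrb hrne hrnadj hba hbb hbne h1' h2' h3' h4' hBUb

end Main
end Stmt9
/-- in a basic CUH graph omitting `D` with a non-independent color class,
`T_r` is minimally omitted iff `T̃_r` is minimally omitted, and this holds iff ω_R = 2. -/
theorem stmt_9 {V : Type} (G : SimpleGraph V) (red : V → Prop)
    (hG : IsBasicCUH G red)
    (hOmD : ¬ Realizes G red Dgraph Dred)
    (hni : (∃ u v, red u ∧ red v ∧ G.Adj u v) ∨ (∃ u v, ¬ red u ∧ ¬ red v ∧ G.Adj u v)) :
    (MinOmitted G red Tr TrRed ↔ MinOmitted G red TrTilde TrRed) ∧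
    (MinOmitted G red Tr TrRed ↔
      ∀ M : Set V, IsMaxCliqueIn G {v | red v} M → Cardinal.mk M = 2) := by
  obtain ⟨⟨hcnt, hinf, hUH, rUC, bUC⟩, hnBU, ⟨ra, rb, hra, hrb, hrne, hrnadj⟩,
    ⟨ba, bb, hba, hbb, hbne, hbnadj⟩⟩ := hG
  haveI : Infinite V := hinf
  haveI : Nonempty V := inferInstance
  have hBUred : ¬ IsBlowUpOf G red := fun h => hnBU (Or.inl h)
  have hBUblue : ¬ IsBlowUpOf G (fun v => ¬ red v) := fun h => hnBU (Or.inr h)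
  have hPtoR := fun hP => Stmt9.minTr_to_R' hUH rUC bUC hcnt hra hrb hrne hrnadj
    hba hbb hbne hBUblue hP
  have hQtoR := fun hQ => Stmt9.minTrTilde_to_R' hUH rUC bUC hcnt hra hrb hrne hrnadj
    hba hbb hbne hBUblue hQ
  have hRto := fun hR => Stmt9.R'_to_min hUH rUC hcnt hra hR hBUred
  constructor
  · exact ⟨fun hP => (hRto (hPtoR hP)).2, fun hQ => (hRto (hQtoR hQ)).1⟩
  · constructor
    · intro hP
      exact (Stmt9.omegaR2_iff rUC hra).mpr (hPtoR hP)
    · intro hω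
      exact (hRto ((Stmt9.omegaR2_iff rUC hra).mp hω)).1
end

section
/- Let G be a basic CUH graph in which at least one color class does not form an independent set. If D is minimally omitted in G, then D̃ is minimally omitted in G. -/
open SimpleGraph

namespace Stmt10Aux

open SimpleGraph

variable {V : Type} {G : SimpleGraph V} {red : V → Prop}

lemma transfer1 (hUH : Ultrahomogeneous G red) (x y : V) (hc : red y ↔ red x) :
    ∃ ψ : G ≃g G, (∀ v, red (ψ v) ↔ red v) ∧ ψ x = y := by
  classical
  obtain ⟨ψ, h1, h2⟩ := hUH {x} (Set.finite_singleton x) (fun v => if v = x then y else v)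
    ⟨by intro u hu v hv h; simp_all, by intro v hv; simp_all,
     by intro u hu v hv; simp_all⟩
  exact ⟨ψ, h1, by simpa using h2 x rfl⟩

lemma transfer2 (hUH : Ultrahomogeneous G red) (x1 x2 y1 y2 : V) (hx : x1 ≠ x2) (hy : y1 ≠ y2)
    (hc1 : red y1 ↔ red x1) (hc2 : red y2 ↔ red x2) (hadj : G.Adj y1 y2 ↔ G.Adj x1 x2) :
    ∃ ψ : G ≃g G, (∀ v, red (ψ v) ↔ red v) ∧ ψ x1 = y1 ∧ ψ x2 = y2 := by
  classical
  set f : V → V := fun v => if v = x1 then y1 else if v = x2 then y2 else v with hf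
  have hfx1 : f x1 = y1 := by simp [hf]
  have hfx2 : f x2 = y2 := by simp [hf, hx.symm]
  have hpi : IsPartialIso G red {x1, x2} f := by
    refine ⟨?_, ?_, ?_⟩
    · intro u hu v hv h
      rcases hu with rfl | rfl <;> rcases hv with rfl | rfl <;> simp_all [hfx1, hfx2]
    · intro v hv; rcases hv with rfl | rfl <;> simp_all [hfx1, hfx2]
    · intro u hu v hv
      rcases hu with rfl | rfl <;> rcases hv with rfl | rfl
      · rw [hfx1]; exact iff_of_false (G.irrefl) (G.irrefl)
      · rw [hfx1, hfx2]; exact hadj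
      · rw [hfx1, hfx2]; exact (G.adj_comm _ _).trans (hadj.trans (G.adj_comm _ _))
      · rw [hfx2]; exact iff_of_false (G.irrefl) (G.irrefl)
  obtain ⟨ψ, h1, h2⟩ := hUH {x1, x2} ((Set.finite_singleton x2).insert x1) f hpi
  exact ⟨ψ, h1, by simpa [hfx1] using h2 x1 (by simp), by simpa [hfx2] using h2 x2 (by simp)⟩

lemma transfer3 (hUH : Ultrahomogeneous G red) (x1 x2 x3 y1 y2 y3 : V)
    (hx12 : x1 ≠ x2) (hx13 : x1 ≠ x3) (hx23 : x2 ≠ x3)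
    (hy12 : y1 ≠ y2) (hy13 : y1 ≠ y3) (hy23 : y2 ≠ y3)
    (hc1 : red y1 ↔ red x1) (hc2 : red y2 ↔ red x2) (hc3 : red y3 ↔ red x3)
    (h12 : G.Adj y1 y2 ↔ G.Adj x1 x2) (h13 : G.Adj y1 y3 ↔ G.Adj x1 x3)
    (h23 : G.Adj y2 y3 ↔ G.Adj x2 x3) :
    ∃ ψ : G ≃g G, (∀ v, red (ψ v) ↔ red v) ∧ ψ x1 = y1 ∧ ψ x2 = y2 ∧ ψ x3 = y3 := by
  classical
  set f : V → V := fun v => if v = x1 then y1 else if v = x2 then y2 else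
    if v = x3 then y3 else v with hf
  have hfx1 : f x1 = y1 := by simp [hf]
  have hfx2 : f x2 = y2 := by simp [hf, hx12.symm]
  have hfx3 : f x3 = y3 := by simp [hf, hx13.symm, hx23.symm]
  have hpi : IsPartialIso G red {x1, x2, x3} f := by
    refine ⟨?_, ?_, ?_⟩
    · intro u hu v hv h
      rcases hu with rfl | rfl | rfl <;> rcases hv with rfl | rfl | rfl <;>
        simp_all [hfx1, hfx2, hfx3]
    · intro v hv; rcases hv with rfl | rfl | rfl <;> simp_all [hfx1, hfx2, hfx3]
    · intro u hu v hv
      rcases hu with rfl | rfl | rfl <;> rcases hv with rfl | rfl | rfl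
      · rw [hfx1]; exact iff_of_false (G.irrefl) (G.irrefl)
      · rw [hfx1, hfx2]; exact h12
      · rw [hfx1, hfx3]; exact h13
      · rw [hfx1, hfx2]; exact (G.adj_comm _ _).trans (h12.trans (G.adj_comm _ _))
      · rw [hfx2]; exact iff_of_false (G.irrefl) (G.irrefl)
      · rw [hfx2, hfx3]; exact h23
      · rw [hfx1, hfx3]; exact (G.adj_comm _ _).trans (h13.trans (G.adj_comm _ _))
      · rw [hfx2, hfx3]; exact (G.adj_comm _ _).trans (h23.trans (G.adj_comm _ _))
      · rw [hfx3]; exact iff_of_false (G.irrefl) (G.irrefl)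
  obtain ⟨ψ, h1, h2⟩ := hUH {x1, x2, x3}
    (((Set.finite_singleton x3).insert x2).insert x1) f hpi
  exact ⟨ψ, h1, by simpa [hfx1] using h2 x1 (by simp), by simpa [hfx2] using h2 x2 (by simp),
    by simpa [hfx3] using h2 x3 (by simp)⟩

lemma mkD (r1 r2 b1 b2 : V) (h1 : red r1) (h2 : red r2) (h3 : ¬ red b1) (h4 : ¬ red b2)
    (a12 : G.Adj r1 r2) (a34 : G.Adj b1 b2) (a13 : G.Adj r1 b1) (a14 : G.Adj r1 b2)
    (a23 : G.Adj r2 b1) (n24 : ¬ G.Adj r2 b2) : Realizes G red Dgraph Dred := by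
  classical
  refine ⟨fun i => if i = 0 then r1 else if i = 1 then r2 else if i = 2 then b1 else b2,
    ?_, ?_, ?_⟩
  · intro i j h
    fin_cases i <;> fin_cases j <;> simp_all
  · intro w; fin_cases w <;> simp [Dred, h1, h2, h3, h4]
  · intro u w
    fin_cases u <;> fin_cases w <;>
      simp only [Fin.isValue, if_true, if_false, Fin.reduceEq, ite_true, ite_false,
        reduceIte] <;>
      first
        | exact iff_of_false (G.irrefl) (by simp [Dgraph, SimpleGraph.fromRel_adj])
        | exact iff_of_true ‹_› (by simp [Dgraph, SimpleGraph.fromRel_adj])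
        | exact iff_of_true (G.adj_symm ‹_›) (by simp [Dgraph, SimpleGraph.fromRel_adj])
        | exact iff_of_false n24 (by simp [Dgraph, SimpleGraph.fromRel_adj])
        | exact iff_of_false (fun hh => n24 (G.adj_symm hh))
            (by simp [Dgraph, SimpleGraph.fromRel_adj])

lemma realize_of_fun {W : Type} (H : SimpleGraph W) (redH : W → Prop) (S : Set W)
    (g : W → V)
    (hinj : ∀ i ∈ S, ∀ j ∈ S, g i = g j → i = j)
    (hc : ∀ i ∈ S, (red (g i) ↔ redH i))
    (ha : ∀ i ∈ S, ∀ j ∈ S, (G.Adj (g i) (g j) ↔ H.Adj i j)) :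
    Realizes G red (H.induce S) (fun x => redH x.1) := by
  refine ⟨fun x => g x.1, ?_, ?_, ?_⟩
  · intro x y hxy; exact Subtype.ext (hinj _ x.2 _ y.2 hxy)
  · intro w; exact hc _ w.2
  · intro u w; simpa [SimpleGraph.comap_adj] using ha _ u.2 _ w.2

private lemma notuniv (k : Fin 4) (S : Set (Fin 4)) (h : k ∉ S) : S ≠ Set.univ :=
  fun hh => h (hh ▸ Set.mem_univ _)

section extract
variable (hD2 : ∀ S : Set (Fin 4), S ≠ Set.univ →
  Realizes G red (Dgraph.induce S) (fun x => Dred x.1))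
include hD2

lemma exTr : ∃ p q w, red p ∧ red q ∧ ¬ red w ∧ G.Adj p q ∧ G.Adj p w ∧ G.Adj q w := by
  obtain ⟨f, hinj, hc, ha⟩ := hD2 {0, 1, 2} (notuniv 3 _ (by simp))
  refine ⟨f ⟨0, by simp⟩, f ⟨1, by simp⟩, f ⟨2, by simp⟩, ?_, ?_, ?_, ?_, ?_, ?_⟩
  · exact (hc _).mpr (by simp [Dred])
  · exact (hc _).mpr (by simp [Dred])
  · rw [hc _]; simp [Dred]
  · exact (ha _ _).mpr (by simp [SimpleGraph.comap_adj, Dgraph, SimpleGraph.fromRel_adj])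
  · exact (ha _ _).mpr (by simp [SimpleGraph.comap_adj, Dgraph, SimpleGraph.fromRel_adj])
  · exact (ha _ _).mpr (by simp [SimpleGraph.comap_adj, Dgraph, SimpleGraph.fromRel_adj])

lemma exPr : ∃ p q w, red p ∧ red q ∧ ¬ red w ∧ G.Adj p q ∧ G.Adj p w ∧ ¬ G.Adj q w := by
  obtain ⟨f, hinj, hc, ha⟩ := hD2 {0, 1, 3} (notuniv 2 _ (by simp))
  refine ⟨f ⟨0, by simp⟩, f ⟨1, by simp⟩, f ⟨3, by simp⟩, ?_, ?_, ?_, ?_, ?_, ?_⟩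
  · exact (hc _).mpr (by simp [Dred])
  · exact (hc _).mpr (by simp [Dred])
  · rw [hc _]; simp [Dred]
  · exact (ha _ _).mpr (by simp [SimpleGraph.comap_adj, Dgraph, SimpleGraph.fromRel_adj])
  · exact (ha _ _).mpr (by simp [SimpleGraph.comap_adj, Dgraph, SimpleGraph.fromRel_adj])
  · intro h
    have := (ha _ _).mp h
    simp [SimpleGraph.comap_adj, Dgraph, SimpleGraph.fromRel_adj] at this

lemma exTb : ∃ p w z, red p ∧ ¬ red w ∧ ¬ red z ∧ G.Adj w z ∧ G.Adj p w ∧ G.Adj p z := by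
  obtain ⟨f, hinj, hc, ha⟩ := hD2 {0, 2, 3} (notuniv 1 _ (by simp))
  refine ⟨f ⟨0, by simp⟩, f ⟨2, by simp⟩, f ⟨3, by simp⟩, ?_, ?_, ?_, ?_, ?_, ?_⟩
  · exact (hc _).mpr (by simp [Dred])
  · rw [hc _]; simp [Dred]
  · rw [hc _]; simp [Dred]
  · exact (ha _ _).mpr (by simp [SimpleGraph.comap_adj, Dgraph, SimpleGraph.fromRel_adj])
  · exact (ha _ _).mpr (by simp [SimpleGraph.comap_adj, Dgraph, SimpleGraph.fromRel_adj])
  · exact (ha _ _).mpr (by simp [SimpleGraph.comap_adj, Dgraph, SimpleGraph.fromRel_adj])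

lemma exPb : ∃ p w z, red p ∧ ¬ red w ∧ ¬ red z ∧ G.Adj w z ∧ G.Adj p w ∧ ¬ G.Adj p z := by
  obtain ⟨f, hinj, hc, ha⟩ := hD2 {1, 2, 3} (notuniv 0 _ (by simp))
  refine ⟨f ⟨1, by simp⟩, f ⟨2, by simp⟩, f ⟨3, by simp⟩, ?_, ?_, ?_, ?_, ?_, ?_⟩
  · exact (hc _).mpr (by simp [Dred])
  · rw [hc _]; simp [Dred]
  · rw [hc _]; simp [Dred]
  · exact (ha _ _).mpr (by simp [SimpleGraph.comap_adj, Dgraph, SimpleGraph.fromRel_adj])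
  · exact (ha _ _).mpr (by simp [SimpleGraph.comap_adj, Dgraph, SimpleGraph.fromRel_adj])
  · intro h
    have := (ha _ _).mp h
    simp [SimpleGraph.comap_adj, Dgraph, SimpleGraph.fromRel_adj] at this

end extract

end Stmt10Aux
namespace Stmt10Aux

open SimpleGraph

variable {V : Type} {G : SimpleGraph V} {red : V → Prop}

section main
variable (hUH : Ultrahomogeneous G red)
  (hD2 : ∀ S : Set (Fin 4), S ≠ Set.univ →
    Realizes G red (Dgraph.induce S) (fun x => Dred x.1))
include hUH hD2

lemma blue_two (hcliqB : IsUnionOfCliques G {v | ¬ red v}) (z : V) (hz : ¬ red z) :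
    ∃ z2 z3, ¬ red z2 ∧ ¬ red z3 ∧ z2 ≠ z3 ∧ G.Adj z z2 ∧ G.Adj z z3 ∧ G.Adj z2 z3 := by
  -- a blue neighbour z2 of z
  obtain ⟨p0, w0, z0, hp0, hw0, hz0, hwz0, hpw0, hpz0⟩ := exTb hD2
  obtain ⟨ψ1, hψ1c, hψ1⟩ := transfer1 hUH w0 z (iff_of_false hz hw0)
  set z2 := ψ1 z0 with hz2def
  have hz2 : ¬ red z2 := fun h => hz0 ((hψ1c z0).mp h)
  have hadj2 : G.Adj z z2 := by
    have := ψ1.map_adj_iff.mpr hwz0; rwa [hψ1] at this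
  -- a red g adjacent to both z and z2
  obtain ⟨p, w, t, hp, hw, ht, hwt, hpw, hpt⟩ := exTb hD2
  obtain ⟨ψ2, hψ2c, hψ2w, hψ2t⟩ := transfer2 hUH w t z z2 hwt.ne hadj2.ne
    (iff_of_false hz hw) (iff_of_false hz2 ht) (iff_of_true hadj2 hwt)
  set g := ψ2 p with hgdef
  have hg : red g := (hψ2c p).mpr hp
  have hgz : G.Adj g z := by
    have := ψ2.map_adj_iff.mpr hpw; rwa [hψ2w] at this
  have hgz2 : G.Adj g z2 := by
    have := ψ2.map_adj_iff.mpr hpt; rwa [hψ2t] at this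
  -- a red h adjacent to z but not z2
  obtain ⟨p', w', t', hp', hw', ht', hwt', hpw', hpt'⟩ := exPb hD2
  obtain ⟨ψ3, hψ3c, hψ3w, hψ3t⟩ := transfer2 hUH w' t' z z2 hwt'.ne hadj2.ne
    (iff_of_false hz hw') (iff_of_false hz2 ht') (iff_of_true hadj2 hwt')
  set h := ψ3 p' with hhdef
  have hh : red h := (hψ3c p').mpr hp'
  have hhz : G.Adj h z := by
    have := ψ3.map_adj_iff.mpr hpw'; rwa [hψ3w] at this
  have hnhz2 : ¬ G.Adj h z2 := by
    intro hcon
    rw [← hψ3t] at hcon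
    exact hpt' (ψ3.map_adj_iff.mp hcon)
  -- transfer (g, z) to (h, z), image of z2 is a third blue neighbour
  obtain ⟨ψ4, hψ4c, hψ4g, hψ4z⟩ := transfer2 hUH g z h z
    (fun e => hz (e ▸ hg)) (fun e => hz (e ▸ hh))
    (iff_of_true hh hg) Iff.rfl (iff_of_true hhz hgz)
  set z3 := ψ4 z2 with hz3def
  have hz3 : ¬ red z3 := fun hcon => hz2 ((hψ4c z2).mp hcon)
  have hzz3 : G.Adj z z3 := by
    have := ψ4.map_adj_iff.mpr hadj2; rwa [hψ4z] at this
  have hhz3 : G.Adj h z3 := by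
    have := ψ4.map_adj_iff.mpr hgz2; rwa [hψ4g] at this
  have hne : z2 ≠ z3 := fun e => hnhz2 (e ▸ hhz3)
  exact ⟨z2, z3, hz2, hz3, hne, hadj2, hzz3,
    hcliqB z2 hz2 z hz z3 hz3 (G.adj_symm hadj2) hzz3 hne⟩

lemma red_two (hcliqR : IsUnionOfCliques G {v | red v}) (x : V) (hx : red x) :
    ∃ x2 x3, red x2 ∧ red x3 ∧ x2 ≠ x3 ∧ G.Adj x x2 ∧ G.Adj x x3 ∧ G.Adj x2 x3 := by
  obtain ⟨p0, q0, w0, hp0, hq0, hw0, hpq0, hpw0, hqw0⟩ := exTr hD2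
  obtain ⟨ψ1, hψ1c, hψ1⟩ := transfer1 hUH p0 x (iff_of_true hx hp0)
  set x2 := ψ1 q0 with hx2def
  have hx2 : red x2 := (hψ1c q0).mpr hq0
  have hadj2 : G.Adj x x2 := by
    have := ψ1.map_adj_iff.mpr hpq0; rwa [hψ1] at this
  -- blue w1 adjacent to both x and x2
  obtain ⟨p, q, w, hp, hq, hw, hpq, hpw, hqw⟩ := exTr hD2
  obtain ⟨ψ2, hψ2c, hψ2p, hψ2q⟩ := transfer2 hUH p q x x2 hpq.ne hadj2.ne
    (iff_of_true hx hp) (iff_of_true hx2 hq) (iff_of_true hadj2 hpq)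
  set w1 := ψ2 w with hw1def
  have hw1 : ¬ red w1 := fun hcon => hw ((hψ2c w).mp hcon)
  have hxw1 : G.Adj x w1 := by
    have := ψ2.map_adj_iff.mpr hpw; rwa [hψ2p] at this
  have hx2w1 : G.Adj x2 w1 := by
    have := ψ2.map_adj_iff.mpr hqw; rwa [hψ2q] at this
  -- blue g adjacent to x but not x2
  obtain ⟨p', q', w', hp', hq', hw', hpq', hpw', hqw'⟩ := exPr hD2
  obtain ⟨ψ3, hψ3c, hψ3p, hψ3q⟩ := transfer2 hUH p' q' x x2 hpq'.ne hadj2.ne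
    (iff_of_true hx hp') (iff_of_true hx2 hq') (iff_of_true hadj2 hpq')
  set g := ψ3 w' with hgdef
  have hg : ¬ red g := fun hcon => hw' ((hψ3c w').mp hcon)
  have hxg : G.Adj x g := by
    have := ψ3.map_adj_iff.mpr hpw'; rwa [hψ3p] at this
  have hnx2g : ¬ G.Adj x2 g := by
    intro hcon
    rw [← hψ3q] at hcon
    exact hqw' (ψ3.map_adj_iff.mp hcon)
  -- transfer (w1, x) to (g, x)
  obtain ⟨ψ4, hψ4c, hψ4w1, hψ4x⟩ := transfer2 hUH w1 x g x
    (fun e => hw1 (e ▸ hx)) (fun e => hg (e ▸ hx))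
    (iff_of_false hg hw1) Iff.rfl (iff_of_true (G.adj_symm hxg) (G.adj_symm hxw1))
  set x3 := ψ4 x2 with hx3def
  have hx3 : red x3 := (hψ4c x2).mpr hx2
  have hxx3 : G.Adj x x3 := by
    have := ψ4.map_adj_iff.mpr hadj2; rwa [hψ4x] at this
  have hgx3 : G.Adj g x3 := by
    have := ψ4.map_adj_iff.mpr (G.adj_symm hx2w1); rwa [hψ4w1] at this
  have hne : x2 ≠ x3 := fun e => hnx2g (e ▸ G.adj_symm hgx3)
  exact ⟨x2, x3, hx2, hx3, hne, hadj2, hxx3,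
    hcliqR x2 hx2 x hx x3 hx3 (G.adj_symm hadj2) hxx3 hne⟩

lemma exTbTilde (hcliqB : IsUnionOfCliques G {v | ¬ red v})
    (hD1 : ¬ Realizes G red Dgraph Dred) :
    ∃ x z t, red x ∧ ¬ red z ∧ ¬ red t ∧ G.Adj z t ∧ ¬ G.Adj x z ∧ ¬ G.Adj x t := by
  by_contra hcon
  have hW : ∀ x z t, red x → ¬ red z → ¬ red t → G.Adj z t → G.Adj x z ∨ G.Adj x t := by
    intro x z t hx hzz htt hzt
    by_contra hc; push_neg at hc
    exact hcon ⟨x, z, t, hx, hzz, htt, hzt, hc.1, hc.2⟩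
  obtain ⟨p, q, w, hp, hq, hw, hpq, hpw, hqw⟩ := exPr hD2
  obtain ⟨z2, z3, hz2, hz3, hne, hwz2, hwz3, hz23⟩ := blue_two hUH hD2 hcliqB w hw
  have hqz2 : G.Adj q z2 := ((hW q w z2 hq hw hz2 hwz2).resolve_left hqw)
  have hqz3 : G.Adj q z3 := ((hW q w z3 hq hw hz3 hwz3).resolve_left hqw)
  have hnpz2 : ¬ G.Adj p z2 := by
    intro hpz2
    exact hD1 (mkD p q z2 w hp hq hz2 hw hpq (G.adj_symm hwz2) hpz2 hpw hqz2 hqw)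
  have hnpz3 : ¬ G.Adj p z3 := by
    intro hpz3
    exact hD1 (mkD p q z3 w hp hq hz3 hw hpq (G.adj_symm hwz3) hpz3 hpw hqz3 hqw)
  rcases hW p z2 z3 hp hz2 hz3 hz23 with h | h
  · exact hnpz2 h
  · exact hnpz3 h

lemma exTrTilde (hcliqR : IsUnionOfCliques G {v | red v})
    (hD1 : ¬ Realizes G red Dgraph Dred) :
    ∃ s s' m, red s ∧ red s' ∧ ¬ red m ∧ G.Adj s s' ∧ ¬ G.Adj m s ∧ ¬ G.Adj m s' := by
  by_contra hcon
  have hW : ∀ y z t, ¬ red y → red z → red t → G.Adj z t → G.Adj y z ∨ G.Adj y t := by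
    intro y z t hy hzz htt hzt
    by_contra hc; push_neg at hc
    exact hcon ⟨z, t, y, hzz, htt, hy, hzt, hc.1, hc.2⟩
  obtain ⟨p, w, t', hp, hw, ht', hwt', hpw, hpt'⟩ := exPb hD2
  obtain ⟨x2, x3, hx2, hx3, hne, hpx2, hpx3, hx23⟩ := red_two hUH hD2 hcliqR p hp
  have hnt'p : ¬ G.Adj t' p := fun h => hpt' (G.adj_symm h)
  have ht'x2 : G.Adj t' x2 := ((hW t' p x2 ht' hp hx2 hpx2).resolve_left hnt'p)
  have ht'x3 : G.Adj t' x3 := ((hW t' p x3 ht' hp hx3 hpx3).resolve_left hnt'p)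
  have hnwx2 : ¬ G.Adj w x2 := by
    intro hwx2
    exact hD1 (mkD x2 p w t' hx2 hp hw ht' (G.adj_symm hpx2) hwt' (G.adj_symm hwx2)
      (G.adj_symm ht'x2) hpw hpt')
  have hnwx3 : ¬ G.Adj w x3 := by
    intro hwx3
    exact hD1 (mkD x3 p w t' hx3 hp hw ht' (G.adj_symm hpx3) hwt' (G.adj_symm hwx3)
      (G.adj_symm ht'x3) hpw hpt')
  rcases hW w x2 x3 hw hx2 hx3 hx23 with h | h
  · exact hnwx2 h
  · exact hnwx3 h

lemma Dtilde_omitted (hcliqB : IsUnionOfCliques G {v | ¬ red v})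
    (hD1 : ¬ Realizes G red Dgraph Dred) :
    ¬ Realizes G red Dtilde Dred := by
  rintro ⟨f, hinj, hc, ha⟩
  set a := f 0 with hadef
  set b := f 1 with hbdef
  set c := f 2 with hcdef
  set d := f 3 with hddef
  have hra : red a := (hc 0).mpr (by simp [Dred])
  have hrb : red b := (hc 1).mpr (by simp [Dred])
  have hrc : ¬ red c := by rw [hc 2]; simp [Dred]
  have hrd : ¬ red d := by rw [hc 3]; simp [Dred]
  have hab : G.Adj a b := (ha 0 1).mpr (by simp [Dtilde, SimpleGraph.fromRel_adj])
  have hcd : G.Adj c d := (ha 2 3).mpr (by simp [Dtilde, SimpleGraph.fromRel_adj])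
  have hbd : G.Adj b d := (ha 1 3).mpr (by simp [Dtilde, SimpleGraph.fromRel_adj])
  have nac : ¬ G.Adj a c := fun h => by
    simpa [Dtilde, SimpleGraph.fromRel_adj] using (ha 0 2).mp h
  have nad : ¬ G.Adj a d := fun h => by
    simpa [Dtilde, SimpleGraph.fromRel_adj] using (ha 0 3).mp h
  have nbc : ¬ G.Adj b c := fun h => by
    simpa [Dtilde, SimpleGraph.fromRel_adj] using (ha 1 2).mp h
  -- blue e adjacent to both a and b
  obtain ⟨p, q, w, hp, hq, hw, hpq, hpw, hqw⟩ := exTr hD2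
  obtain ⟨ψ, hψc, hψp, hψq⟩ := transfer2 hUH p q a b hpq.ne hab.ne
    (iff_of_true hra hp) (iff_of_true hrb hq) (iff_of_true hab hpq)
  set e := ψ w with hedef
  have hre : ¬ red e := fun hcon => hw ((hψc w).mp hcon)
  have hea : G.Adj a e := by
    have := ψ.map_adj_iff.mpr hpw; rwa [hψp] at this
  have heb : G.Adj b e := by
    have := ψ.map_adj_iff.mpr hqw; rwa [hψq] at this
  by_cases hcase : ∀ z, ¬ red z → G.Adj z e → G.Adj z a ∧ G.Adj z b
  · -- every blue neighbour of e sees both a and b: contradiction via (b,d) ↦ (b,e)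
    obtain ⟨ψ2, hψ2c, hψ2b, hψ2d⟩ := transfer2 hUH b d b e
      (fun h => hrd (h ▸ hrb)) (fun h => hre (h ▸ hrb))
      Iff.rfl (iff_of_false hre hrd) (iff_of_true heb hbd)
    set c1 := ψ2 c with hc1def
    have hrc1 : ¬ red c1 := fun hcon => hrc ((hψ2c c).mp hcon)
    have hc1e : G.Adj c1 e := by
      have := ψ2.map_adj_iff.mpr hcd; rwa [hψ2d] at this
    have hnc1b : ¬ G.Adj c1 b := by
      intro hcon
      rw [← hψ2b] at hcon
      exact nbc (G.adj_symm (ψ2.map_adj_iff.mp hcon))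
    exact hnc1b (hcase c1 hrc1 hc1e).2
  · push_neg at hcase
    obtain ⟨z, hz, hze, hzab⟩ := hcase
    have nza : ¬ G.Adj z a := by
      intro hza
      have hnzb := hzab hza
      exact hD1 (mkD a b e z hra hrb hre hz hab (G.adj_symm hze) hea (G.adj_symm hza) heb
        (fun h => hnzb (G.adj_symm h)))
    have nzb : ¬ G.Adj z b := by
      intro hzb
      exact hD1 (mkD b a e z hrb hra hre hz (G.adj_symm hab) (G.adj_symm hze) heb (G.adj_symm hzb)
        hea (fun h => nza (G.adj_symm h)))
    obtain ⟨ψ3, hψ3c, hψ3a, hψ3b, hψ3cz⟩ := transfer3 hUH a b c a b z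
      hab.ne (fun h => hrc (h ▸ hra)) (fun h => hrc (h ▸ hrb))
      hab.ne (fun h => hz (h ▸ hra)) (fun h => hz (h ▸ hrb))
      Iff.rfl Iff.rfl (iff_of_false hz hrc)
      Iff.rfl (iff_of_false (fun h => nza (G.adj_symm h)) nac)
      (iff_of_false (fun h => nzb (G.adj_symm h)) nbc)
    set v := ψ3 d with hvdef
    have hrv : ¬ red v := fun hcon => hrd ((hψ3c d).mp hcon)
    have hzv : G.Adj z v := by
      have := ψ3.map_adj_iff.mpr hcd; rwa [hψ3cz] at this
    have hbv : G.Adj b v := by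
      have := ψ3.map_adj_iff.mpr hbd; rwa [hψ3b] at this
    have nav : ¬ G.Adj a v := by
      intro hcon
      rw [← hψ3a] at hcon
      exact nad (ψ3.map_adj_iff.mp hcon)
    have hnev : e ≠ v := fun h => nav (h ▸ hea)
    have hev : G.Adj e v := hcliqB e hre z hz v hrv (G.adj_symm hze) hzv hnev
    exact hD1 (mkD b a e v hrb hra hre hrv (G.adj_symm hab) hev heb hbv hea nav)

end main

end Stmt10Aux
namespace Stmt10Aux

open SimpleGraph

variable {V : Type} {G : SimpleGraph V} {red : V → Prop}

set_option maxHeartbeats 1000000 in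
lemma case0 (S : Set (Fin 4)) (hk : (0 : Fin 4) ∉ S) (p w z : V)
    (hp : red p) (hw : ¬ red w) (hz : ¬ red z)
    (hwz : G.Adj w z) (hpw : G.Adj p w) (hpz : ¬ G.Adj p z) :
    Realizes G red (Dtilde.induce S) (fun x => Dred x.1) := by
  classical
  have hwz' := G.adj_symm hwz
  have hpw' := G.adj_symm hpw
  have hpz' : ¬ G.Adj z p := fun h => hpz (G.adj_symm h)
  refine realize_of_fun Dtilde Dred S
    (fun i => if i = 1 then p else if i = 2 then z else w) ?_ ?_ ?_
  · intro i hi j hj h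
    fin_cases i <;> fin_cases j <;>
      first
        | exact absurd hi hk
        | exact absurd hj hk
        | simp_all
  · intro i hi
    fin_cases i <;>
      first
        | exact absurd hi hk
        | simp_all [Dred]
  · intro i hi j hj
    fin_cases i <;> fin_cases j <;>
      first
        | exact absurd hi hk
        | exact absurd hj hk
        | simp_all [Dtilde, SimpleGraph.fromRel_adj]

set_option maxHeartbeats 1000000 in
lemma case1 (S : Set (Fin 4)) (hk : (1 : Fin 4) ∉ S) (x z t : V)
    (hx : red x) (hz : ¬ red z) (ht : ¬ red t)
    (hzt : G.Adj z t) (hxz : ¬ G.Adj x z) (hxt : ¬ G.Adj x t) :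
    Realizes G red (Dtilde.induce S) (fun x => Dred x.1) := by
  classical
  have hzt' := G.adj_symm hzt
  have hxz' : ¬ G.Adj z x := fun h => hxz (G.adj_symm h)
  have hxt' : ¬ G.Adj t x := fun h => hxt (G.adj_symm h)
  refine realize_of_fun Dtilde Dred S
    (fun i => if i = 0 then x else if i = 2 then z else t) ?_ ?_ ?_
  · intro i hi j hj h
    fin_cases i <;> fin_cases j <;>
      first
        | exact absurd hi hk
        | exact absurd hj hk
        | simp_all
  · intro i hi
    fin_cases i <;>
      first
        | exact absurd hi hk
        | simp_all [Dred]
  · intro i hi j hj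
    fin_cases i <;> fin_cases j <;>
      first
        | exact absurd hi hk
        | exact absurd hj hk
        | simp_all [Dtilde, SimpleGraph.fromRel_adj]

set_option maxHeartbeats 1000000 in
lemma case2 (S : Set (Fin 4)) (hk : (2 : Fin 4) ∉ S) (p q w : V)
    (hp : red p) (hq : red q) (hw : ¬ red w)
    (hpq : G.Adj p q) (hpw : G.Adj p w) (hqw : ¬ G.Adj q w) :
    Realizes G red (Dtilde.induce S) (fun x => Dred x.1) := by
  classical
  have hpq' := G.adj_symm hpq
  have hpw' := G.adj_symm hpw
  have hqw' : ¬ G.Adj w q := fun h => hqw (G.adj_symm h)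
  refine realize_of_fun Dtilde Dred S
    (fun i => if i = 0 then q else if i = 1 then p else w) ?_ ?_ ?_
  · intro i hi j hj h
    fin_cases i <;> fin_cases j <;>
      first
        | exact absurd hi hk
        | exact absurd hj hk
        | simp_all
  · intro i hi
    fin_cases i <;>
      first
        | exact absurd hi hk
        | simp_all [Dred]
  · intro i hi j hj
    fin_cases i <;> fin_cases j <;>
      first
        | exact absurd hi hk
        | exact absurd hj hk
        | simp_all [Dtilde, SimpleGraph.fromRel_adj]

set_option maxHeartbeats 1000000 in
lemma case3 (S : Set (Fin 4)) (hk : (3 : Fin 4) ∉ S) (s s' m : V)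
    (hs : red s) (hs' : red s') (hm : ¬ red m)
    (hss' : G.Adj s s') (hms : ¬ G.Adj m s) (hms' : ¬ G.Adj m s') :
    Realizes G red (Dtilde.induce S) (fun x => Dred x.1) := by
  classical
  have hss'2 := G.adj_symm hss'
  have hms2 : ¬ G.Adj s m := fun h => hms (G.adj_symm h)
  have hms'2 : ¬ G.Adj s' m := fun h => hms' (G.adj_symm h)
  refine realize_of_fun Dtilde Dred S
    (fun i => if i = 0 then s else if i = 1 then s' else m) ?_ ?_ ?_
  · intro i hi j hj h
    fin_cases i <;> fin_cases j <;>
      first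
        | exact absurd hi hk
        | exact absurd hj hk
        | simp_all
  · intro i hi
    fin_cases i <;>
      first
        | exact absurd hi hk
        | simp_all [Dred]
  · intro i hi j hj
    fin_cases i <;> fin_cases j <;>
      first
        | exact absurd hi hk
        | exact absurd hj hk
        | simp_all [Dtilde, SimpleGraph.fromRel_adj]

end Stmt10Aux

/-- in a basic CUH graph with a non-independent color class, if `D` is
minimally omitted then so is `D̃`. -/
theorem stmt_10 {V : Type} (G : SimpleGraph V) (red : V → Prop)
    (hG : IsBasicCUH G red)
    (hni : (∃ u v, red u ∧ red v ∧ G.Adj u v) ∨ (∃ u v, ¬ red u ∧ ¬ red v ∧ G.Adj u v))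
    (hD : MinOmitted G red Dgraph Dred) :
    MinOmitted G red Dtilde Dred := by
  classical
  obtain ⟨⟨_, _, hUH, hcliqR, hcliqB⟩, _, _, _⟩ := hG
  obtain ⟨hD1, hD2⟩ := hD
  constructor
  · exact Stmt10Aux.Dtilde_omitted hUH hD2 hcliqB hD1
  · intro S hS
    obtain ⟨k, hk⟩ : ∃ k, k ∉ S := by
      by_contra hh; push_neg at hh; exact hS (Set.eq_univ_of_forall hh)
    fin_cases k
    · obtain ⟨p, w, z, hp, hw, hz, hwz, hpw, hpz⟩ := Stmt10Aux.exPb hD2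
      exact Stmt10Aux.case0 S hk p w z hp hw hz hwz hpw hpz
    · obtain ⟨x, z, t, hx, hz, ht, hzt, hxz, hxt⟩ :=
        Stmt10Aux.exTbTilde hUH hD2 hcliqB hD1
      exact Stmt10Aux.case1 S hk x z t hx hz ht hzt hxz hxt
    · obtain ⟨p, q, w, hp, hq, hw, hpq, hpw, hqw⟩ := Stmt10Aux.exPr hD2
      exact Stmt10Aux.case2 S hk p q w hp hq hw hpq hpw hqw
    · obtain ⟨s, s', m, hs, hs', hm, hss', hms, hms'⟩ :=
        Stmt10Aux.exTrTilde hUH hD2 hcliqR hD1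
      exact Stmt10Aux.case3 S hk s s' m hs hs' hm hss' hms hms'
end
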